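/- arXiv:2106.07106 — 7 statements merged into one kernel-verified Lean document; each statement's English description precedes it below -/
import Mathlib

section
/- Two connected undirected weighted networks G₁ = (U,E₁,w₁) and G₂ = (U,E₂,w₂) on the same vertex set have identical random-walk transition kernels if and only if they are equivalent, i.e. E₁ = E₂ and there exists a constant C > 0 with w₁(u,u') = C·w₂(u,u') for all u,u' ∈ U. -/
/-!
Equal transition kernels say that each row of `w₁` is the corresponding row of `w₂` rescaled
by `r u = d₁ u / d₂ u`. Symmetry of both weights forces `r u = r u'` across every edge, so by
connectivity `r` is a single positive constant `C`.
-/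

theorem Relation.ReflTransGen.eq_of_forall_rel {α β : Type*} {R : α → α → Prop} {f : α → β}
    (hf : ∀ a b, R a b → f a = f b) {a b : α} (hab : Relation.ReflTransGen R a b) :
    f a = f b := by
  induction hab with
  | refl => rfl
  | tail _ hbc ih => exact ih.trans (hf _ _ hbc)

theorem eq_div_mul_of_div_eq_div {K : Type*} [Field K] {a b c d : K} (hc : c ≠ 0) (hd : d ≠ 0)
    (h : a / c = b / d) : a = c / d * b := by
  field_simp at h ⊢
  linear_combination h

section RowScaling

variable {U R : Type*} [CommRing R] [IsDomain R] {w₁ w₂ : U → U → R} {r : U → R}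

theorem rowScale_eq_of_ne_zero (h1sym : ∀ u u', w₁ u u' = w₁ u' u)
    (h2sym : ∀ u u', w₂ u u' = w₂ u' u) (hscale : ∀ u u', w₁ u u' = r u * w₂ u u')
    {u u' : U} (hw : w₂ u u' ≠ 0) : r u = r u' := by
  refine mul_right_cancel₀ hw ?_
  calc r u * w₂ u u' = w₁ u' u := by rw [← hscale, h1sym]
    _ = r u' * w₂ u u' := by rw [hscale, h2sym]

theorem rowScale_eq_of_reflTransGen (h1sym : ∀ u u', w₁ u u' = w₁ u' u)
    (h2sym : ∀ u u', w₂ u u' = w₂ u' u) (hscale : ∀ u u', w₁ u u' = r u * w₂ u u')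
    {u u' : U} (hconn : Relation.ReflTransGen (fun a b => w₂ a b ≠ 0) u u') : r u = r u' :=
  hconn.eq_of_forall_rel (f := r) fun _ _ => rowScale_eq_of_ne_zero h1sym h2sym hscale

end RowScaling

theorem network_equivalence_iff_same_random_walk_general
    {U : Type*} [Fintype U]
    (w₁ w₂ : U → U → ℝ)
    (h1sym : ∀ u u', w₁ u u' = w₁ u' u) (h2sym : ∀ u u', w₂ u u' = w₂ u' u)
    (h2conn : ∀ u u' : U, Relation.ReflTransGen (fun a b => 0 < w₂ a b) u u')
    (h1deg : ∀ u, 0 < ∑ u', w₁ u u') (h2deg : ∀ u, 0 < ∑ u', w₂ u u') :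
    (∀ u u', w₁ u u' / (∑ u0, w₁ u u0) = w₂ u u' / (∑ u0, w₂ u u0))
    ↔ ((∀ u u', 0 < w₁ u u' ↔ 0 < w₂ u u')
        ∧ ∃ C > (0 : ℝ), ∀ u u', w₁ u u' = C * w₂ u u') := by
  constructor
  · intro hP
    set r : U → ℝ := fun u => (∑ u0, w₁ u u0) / (∑ u0, w₂ u u0)
    have hr : ∀ u, 0 < r u := fun u => div_pos (h1deg u) (h2deg u)
    have hscale : ∀ u u', w₁ u u' = r u * w₂ u u' := fun u u' =>
      eq_div_mul_of_div_eq_div (h1deg u).ne' (h2deg u).ne' (hP u u')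
    have hconst : ∀ u u', r u = r u' := fun u u' =>
      rowScale_eq_of_reflTransGen h1sym h2sym hscale
        (Relation.ReflTransGen.mono (fun _ _ hab => LT.lt.ne' hab) _ _ (h2conn u u'))
    refine ⟨fun u u' => by rw [hscale, mul_pos_iff_of_pos_left (hr u)], ?_⟩
    obtain _ | ⟨⟨u₀⟩⟩ := isEmpty_or_nonempty U
    · exact ⟨1, one_pos, fun u => isEmptyElim u⟩
    · exact ⟨r u₀, hr u₀, fun u u' => by rw [hscale, hconst u u₀]⟩
  · rintro ⟨-, C, hC, hw⟩ u u'
    simp only [hw, ← Finset.mul_sum, mul_div_mul_left _ _ hC.ne']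

/-- Two connected undirected weighted networks on the same vertex set have
identical random-walk transition kernels `P(u'|u) = w(u,u')/d(u)` if and only if they are
equivalent: same edge set (edges are the pairs of positive weight) and weights equal up to
a positive multiplicative constant. -/
theorem network_equivalence_iff_same_random_walk
    {U : Type*} [Fintype U]
    (w₁ w₂ : U → U → ℝ)
    (h1nn : ∀ u u', 0 ≤ w₁ u u') (h2nn : ∀ u u', 0 ≤ w₂ u u')
    (h1sym : ∀ u u', w₁ u u' = w₁ u' u) (h2sym : ∀ u u', w₂ u u' = w₂ u' u)
    (h1conn : ∀ u u' : U, Relation.ReflTransGen (fun a b => 0 < w₁ a b) u u')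
    (h2conn : ∀ u u' : U, Relation.ReflTransGen (fun a b => 0 < w₂ a b) u u')
    (h1deg : ∀ u, 0 < ∑ u', w₁ u u') (h2deg : ∀ u, 0 < ∑ u', w₂ u u') :
    (∀ u u', w₁ u u' / (∑ u0, w₁ u u0) = w₂ u u' / (∑ u0, w₂ u u0))
    ↔ ((∀ u u', 0 < w₁ u u' ↔ 0 < w₂ u u')
        ∧ ∃ C > (0 : ℝ), ∀ u u', w₁ u u' = C * w₂ u u') :=
  network_equivalence_iff_same_random_walk_general w₁ w₂ h1sym h2sym h2conn h1deg h2deg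
end

section
/- Let G₁ and G₂ be connected undirected networks on the same vertex set U with weight functions w₁, w₂ and the same total degree D. Under the zero-one cost c(u,u') = 1{u ≠ u'}, the NetOTC cost satisfies ρ(G₁,G₂) ≥ (1/(4D)) ∑_{u,u'∈U} |w₁(u,u') − w₂(u,u')|. -/
/-! Given a stationary transition coupling `(lam, R)`, the law of the two-step blocks
`((X₀, X₁), (Y₀, Y₁))` couples the edge distributions `w₁ / D` and `w₂ / D`. Its mass off the
diagonal is therefore at least half their `L¹` distance, and it is at most
`P(X₀ ≠ Y₀) + P(X₁ ≠ Y₁)`, which is twice the cost of `lam` because `(X₁, Y₁)` has law `lam` again. -/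

/-- `(lam, R)` is a stationary transition coupling of the Markov kernels `P` and `Q`
whose one-dimensional marginals are the stationary distributions `p` and `q`. -/
def IsTCStat {U V : Type*} [Fintype U] [Fintype V]
    (P : U → U → ℝ) (Q : V → V → ℝ) (p : U → ℝ) (q : V → ℝ)
    (lam : U × V → ℝ) (R : U × V → U × V → ℝ) : Prop :=
  (∀ a b, 0 ≤ R a b) ∧
  (∀ (a : U × V) (u' : U), ∑ v' : V, R a (u', v') = P a.1 u') ∧
  (∀ (a : U × V) (v' : V), ∑ u' : U, R a (u', v') = Q a.2 v') ∧
  (∀ a, 0 ≤ lam a) ∧ (∑ a : U × V, lam a = 1) ∧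
  (∀ b : U × V, ∑ a : U × V, lam a * R a b = lam b) ∧
  (∀ u, ∑ v, lam (u, v) = p u) ∧
  (∀ v, ∑ u, lam (u, v) = q v)

open Finset

structure IsStationaryChain {U : Type*} [Fintype U] (P : U → U → ℝ) (p : U → ℝ) : Prop where
  kernel_nonneg : ∀ u u', 0 ≤ P u u'
  sum_kernel : ∀ u, ∑ u', P u u' = 1
  dist_nonneg : ∀ u, 0 ≤ p u
  sum_dist : ∑ u, p u = 1
  stationary : ∀ u', ∑ u, p u * P u u' = p u'

section Coupling

variable {α : Type*} [Fintype α] [DecidableEq α]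

theorem sum_abs_sub_le_two_mul_sum_offDiag {σ : α → α → ℝ} {μ ν : α → ℝ}
    (hσ : ∀ b c, 0 ≤ σ b c) (hμ : ∀ b, ∑ c, σ b c = μ b) (hν : ∀ c, ∑ b, σ b c = ν c) :
    ∑ b, |μ b - ν b| ≤ 2 * ∑ b, ∑ c, σ b c * (if b = c then 0 else 1) := by
  have hdiag_le_μ : ∀ b, σ b b ≤ μ b := fun b =>
    hμ b ▸ single_le_sum (fun c _ => hσ b c) (mem_univ b)
  have hdiag_le_ν : ∀ b, σ b b ≤ ν b := fun b =>
    hν b ▸ single_le_sum (fun c _ => hσ c b) (mem_univ b)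
  have hoff : ∀ b, ∑ c, σ b c * (if b = c then 0 else 1) = μ b - σ b b := fun b => by
    have hsplit : ∀ c, σ b c * (if b = c then 0 else 1) = σ b c - if b = c then σ b c else 0 :=
      fun c => by split_ifs <;> ring
    rw [sum_congr rfl fun c _ => hsplit c, sum_sub_distrib, Fintype.sum_ite_eq, hμ]
  have hmass : ∑ b, μ b = ∑ b, ν b := by
    simp only [← hμ, ← hν]
    exact sum_comm
  calc ∑ b, |μ b - ν b| ≤ ∑ b, (μ b + ν b - 2 * σ b b) :=
        sum_le_sum fun b _ =>
          abs_sub_le_iff.2 ⟨by linarith [hdiag_le_ν b], by linarith [hdiag_le_μ b]⟩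
    _ = 2 * ∑ b, (μ b - σ b b) := by
        rw [sum_sub_distrib, sum_add_distrib, sum_sub_distrib, ← mul_sum, hmass]
        ring
    _ = _ := by simp only [hoff]

end Coupling

theorem ite_eq_prod_le_add {β γ : Type*} [DecidableEq β] [DecidableEq γ] (b c : β × γ) :
    (if b = c then 0 else 1 : ℝ) ≤
      (if b.1 = c.1 then 0 else 1) + (if b.2 = c.2 then 0 else 1) := by
  obtain ⟨b₁, b₂⟩ := b
  obtain ⟨c₁, c₂⟩ := c
  simp only [Prod.mk.injEq]
  split_ifs <;> simp_all

theorem Fintype.sum_prod_prod_comm {β γ δ ε M : Type*} [Fintype β] [Fintype γ] [Fintype δ]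
    [Fintype ε] [AddCommMonoid M] (F : β × γ → δ × ε → M) :
    ∑ b, ∑ c, F b c = ∑ a : β × δ, ∑ a' : γ × ε, F (a.1, a'.1) (a.2, a'.2) := by
  simp only [Fintype.sum_prod_type]
  exact Finset.sum_congr rfl fun _ _ => Finset.sum_comm

/-- The joint law of the two-step blocks `((X₀, X₁), (Y₀, Y₁))` of a transition coupling. -/
def twoStepCoupling {U V : Type*} (lam : U × V → ℝ) (R : U × V → U × V → ℝ) :
    U × U → V × V → ℝ :=
  fun b c => lam (b.1, c.1) * R (b.1, c.1) (b.2, c.2)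

namespace IsTCStat

variable {U V : Type*} [Fintype U] [Fintype V] {P : U → U → ℝ} {Q : V → V → ℝ} {p : U → ℝ}
  {q : V → ℝ} {lam : U × V → ℝ} {R : U × V → U × V → ℝ}

theorem twoStepCoupling_nonneg (h : IsTCStat P Q p q lam R) (b : U × U) (c : V × V) :
    0 ≤ twoStepCoupling lam R b c :=
  mul_nonneg (h.2.2.2.1 _) (h.1 _ _)

theorem sum_twoStepCoupling_left (h : IsTCStat P Q p q lam R) (b : U × U) :
    ∑ c, twoStepCoupling lam R b c = p b.1 * P b.1 b.2 := by
  obtain ⟨-, hR₁, -, -, -, -, hp, -⟩ := h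
  simp only [twoStepCoupling, Fintype.sum_prod_type, ← mul_sum, hR₁, ← sum_mul, hp]

theorem sum_twoStepCoupling_right (h : IsTCStat P Q p q lam R) (c : V × V) :
    ∑ b, twoStepCoupling lam R b c = q c.1 * Q c.1 c.2 := by
  obtain ⟨-, -, hR₂, -, -, -, -, hq⟩ := h
  simp only [twoStepCoupling, Fintype.sum_prod_type, ← mul_sum, hR₂, ← sum_mul, hq]

theorem sum_kernel_eq_one (h : IsTCStat P Q p q lam R) (hP : ∀ u, ∑ u', P u u' = 1)
    (a : U × V) : ∑ a', R a a' = 1 := by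
  rw [Fintype.sum_prod_type]
  simp only [h.2.1, hP]

theorem sum_twoStepCoupling_mul_fst (h : IsTCStat P Q p q lam R) (hP : ∀ u, ∑ u', P u u' = 1)
    (f : U × V → ℝ) :
    ∑ b, ∑ c, twoStepCoupling lam R b c * f (b.1, c.1) = ∑ a, lam a * f a := by
  rw [Fintype.sum_prod_prod_comm]
  refine sum_congr rfl fun a _ => ?_
  calc ∑ a', lam a * R a a' * f a = lam a * f a * ∑ a', R a a' := by
        rw [mul_sum]
        exact sum_congr rfl fun _ _ => by ring
    _ = lam a * f a := by rw [h.sum_kernel_eq_one hP, mul_one]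

/-- `(X₁, Y₁)` has the same law `lam` as `(X₀, Y₀)`. -/
theorem sum_twoStepCoupling_mul_snd (h : IsTCStat P Q p q lam R) (f : U × V → ℝ) :
    ∑ b, ∑ c, twoStepCoupling lam R b c * f (b.2, c.2) = ∑ a, lam a * f a := by
  rw [Fintype.sum_prod_prod_comm, sum_comm]
  refine sum_congr rfl fun a' _ => ?_
  rw [← h.2.2.2.2.2.1 a', sum_mul]
  rfl

end IsTCStat

theorem IsTCStat.sum_abs_sub_le_four_mul_cost {U : Type*} [Fintype U] [DecidableEq U]
    {P Q : U → U → ℝ} {p q : U → ℝ} {lam : U × U → ℝ} {R : U × U → U × U → ℝ}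
    (h : IsTCStat P Q p q lam R) (hP : ∀ u, ∑ u', P u u' = 1) :
    ∑ b : U × U, |p b.1 * P b.1 b.2 - q b.1 * Q b.1 b.2| ≤
      4 * ∑ a : U × U, lam a * (if a.1 = a.2 then 0 else 1) := by
  set σ := twoStepCoupling lam R
  calc ∑ b : U × U, |p b.1 * P b.1 b.2 - q b.1 * Q b.1 b.2|
      ≤ 2 * ∑ b, ∑ c, σ b c * (if b = c then 0 else 1) :=
        sum_abs_sub_le_two_mul_sum_offDiag h.twoStepCoupling_nonneg h.sum_twoStepCoupling_left
          h.sum_twoStepCoupling_right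
    _ ≤ 2 * ∑ b, ∑ c, (σ b c * (if b.1 = c.1 then 0 else 1) +
          σ b c * (if b.2 = c.2 then 0 else 1)) := by
        gcongr with b _ c _
        rw [← mul_add]
        exact mul_le_mul_of_nonneg_left (ite_eq_prod_le_add b c) (h.twoStepCoupling_nonneg b c)
    _ = 4 * ∑ a : U × U, lam a * (if a.1 = a.2 then 0 else 1) := by
        simp only [sum_add_distrib]
        rw [h.sum_twoStepCoupling_mul_fst hP (fun a => if a.1 = a.2 then 0 else 1),
          h.sum_twoStepCoupling_mul_snd (fun a => if a.1 = a.2 then 0 else 1)]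
        ring

theorem IsStationaryChain.isTCStat_prod {U V : Type*} [Fintype U] [Fintype V]
    {P : U → U → ℝ} {Q : V → V → ℝ} {p : U → ℝ} {q : V → ℝ}
    (hP : IsStationaryChain P p) (hQ : IsStationaryChain Q q) :
    IsTCStat P Q p q (fun a => p a.1 * q a.2) (fun a b => P a.1 b.1 * Q a.2 b.2) := by
  refine ⟨fun a b => mul_nonneg (hP.kernel_nonneg _ _) (hQ.kernel_nonneg _ _),
    fun a u' => ?_, fun a v' => ?_, fun a => mul_nonneg (hP.dist_nonneg _) (hQ.dist_nonneg _),
    ?_, fun b => ?_, fun u => ?_, fun v => ?_⟩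
  · simp only [← mul_sum, hQ.sum_kernel, mul_one]
  · simp only [← sum_mul, hP.sum_kernel, one_mul]
  · rw [Fintype.sum_prod_type, ← sum_mul_sum, hP.sum_dist, hQ.sum_dist, one_mul]
  · calc ∑ a : U × V, p a.1 * q a.2 * (P a.1 b.1 * Q a.2 b.2)
        = (∑ u, p u * P u b.1) * ∑ v, q v * Q v b.2 := by
          rw [sum_mul_sum, Fintype.sum_prod_type]
          exact Finset.sum_congr rfl fun _ _ => Finset.sum_congr rfl fun _ _ => by ring
      _ = p b.1 * q b.2 := by rw [hP.stationary, hQ.stationary]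
  · simp only [← mul_sum, hQ.sum_dist, mul_one]
  · simp only [← sum_mul, hP.sum_dist, one_mul]

section RandomWalk

variable {U : Type*} [Fintype U]

noncomputable def randomWalk (w : U → U → ℝ) (u u' : U) : ℝ :=
  w u u' / ∑ a, w u a

noncomputable def degreeDist (w : U → U → ℝ) (D : ℝ) (u : U) : ℝ :=
  (∑ u', w u u') / D

variable {w : U → U → ℝ} {D : ℝ}

theorem degreeDist_mul_randomWalk (hdeg : ∀ u, ∑ u', w u u' ≠ 0) (u u' : U) :
    degreeDist w D u * randomWalk w u u' = w u u' / D := by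
  rw [degreeDist, randomWalk, div_mul_div_comm, mul_comm, mul_div_mul_right _ _ (hdeg u)]

theorem isStationaryChain_randomWalk (hnn : ∀ u u', 0 ≤ w u u') (hsym : ∀ u u', w u u' = w u' u)
    (hdeg : ∀ u, 0 < ∑ u', w u u') (hD : ∑ u, ∑ u', w u u' = D) (hDpos : 0 < D) :
    IsStationaryChain (randomWalk w) (degreeDist w D) where
  kernel_nonneg u u' := div_nonneg (hnn u u') (hdeg u).le
  sum_kernel u := by simp only [randomWalk, ← sum_div, div_self (hdeg u).ne']
  dist_nonneg u := div_nonneg (hdeg u).le hDpos.le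
  sum_dist := by simp only [degreeDist, ← sum_div, hD, div_self hDpos.ne']
  stationary u' := by
    simp only [degreeDist_mul_randomWalk fun u => (hdeg u).ne', ← sum_div, hsym _ u']
    rfl

end RandomWalk

theorem netotc_weight_lower_bound_general
    {U : Type*} [Fintype U] [DecidableEq U]
    (w₁ w₂ : U → U → ℝ) (D : ℝ)
    (h1nn : ∀ u u', 0 ≤ w₁ u u') (h2nn : ∀ u u', 0 ≤ w₂ u u')
    (h1sym : ∀ u u', w₁ u u' = w₁ u' u) (h2sym : ∀ u u', w₂ u u' = w₂ u' u)
    (h1deg : ∀ u, 0 < ∑ u', w₁ u u') (h2deg : ∀ u, 0 < ∑ u', w₂ u u')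
    (hD1 : ∑ u, ∑ u', w₁ u u' = D) (hD2 : ∑ u, ∑ u', w₂ u u' = D) :
    sInf {x : ℝ | ∃ (lam : U × U → ℝ) (R : U × U → U × U → ℝ),
        IsTCStat (fun u u' => w₁ u u' / ∑ a, w₁ u a)
          (fun u u' => w₂ u u' / ∑ a, w₂ u a)
          (fun u => (∑ u', w₁ u u') / D) (fun u => (∑ u', w₂ u u') / D) lam R ∧
        x = ∑ a : U × U, lam a * (if a.1 = a.2 then (0 : ℝ) else 1)}
    ≥ (1 / (4 * D)) * ∑ u, ∑ u', |w₁ u u' - w₂ u u'| := by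
  rcases isEmpty_or_nonempty U with hU | hU
  · simp only [univ_eq_empty, sum_empty, mul_zero, ge_iff_le]
    exact Real.sInf_nonneg fun _ ⟨_, _, _, hx⟩ => hx.ge
  have hD : 0 < D := hD1 ▸ sum_pos (fun u _ => h1deg u) univ_nonempty
  have hX := isStationaryChain_randomWalk h1nn h1sym h1deg hD1 hD
  have hY := isStationaryChain_randomWalk h2nn h2sym h2deg hD2 hD
  refine le_csInf ⟨_, _, _, hX.isTCStat_prod hY, rfl⟩ ?_
  rintro _ ⟨lam, R, hTC, rfl⟩
  change IsTCStat (randomWalk w₁) (randomWalk w₂) (degreeDist w₁ D) (degreeDist w₂ D) lam R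
    at hTC
  have hbound := hTC.sum_abs_sub_le_four_mul_cost hX.sum_kernel
  simp only [degreeDist_mul_randomWalk fun u => (h1deg u).ne',
    degreeDist_mul_randomWalk fun u => (h2deg u).ne', ← sub_div, abs_div, abs_of_pos hD,
    ← sum_div, Fintype.sum_prod_type, div_le_iff₀ hD] at hbound
  rw [one_div_mul_eq_div, div_le_iff₀ (by positivity), Fintype.sum_prod_type]
  linarith

/-- For connected undirected networks `G₁`, `G₂` on the same vertex set `U`
with degree functions `d₁, d₂` and common total degree `D`, under the zero-one cost the
NetOTC cost satisfies `ρ(G₁,G₂) ≥ (1/(4D)) ∑_{u,u} |w₁(u,u) − w₂(u,u)|`.  Here the random walk on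
`Gᵢ` has kernel `wᵢ(u,u')/dᵢ(u)` and stationary distribution `dᵢ(u)/D`. -/
theorem netotc_weight_lower_bound
    {U : Type*} [Fintype U] [DecidableEq U]
    (w₁ w₂ : U → U → ℝ) (D : ℝ)
    (h1nn : ∀ u u', 0 ≤ w₁ u u') (h2nn : ∀ u u', 0 ≤ w₂ u u')
    (h1sym : ∀ u u', w₁ u u' = w₁ u' u) (h2sym : ∀ u u', w₂ u u' = w₂ u' u)
    (h1conn : ∀ u u' : U, Relation.ReflTransGen (fun a b => 0 < w₁ a b) u u')
    (h2conn : ∀ u u' : U, Relation.ReflTransGen (fun a b => 0 < w₂ a b) u u')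
    (h1deg : ∀ u, 0 < ∑ u', w₁ u u') (h2deg : ∀ u, 0 < ∑ u', w₂ u u')
    (hD1 : ∑ u, ∑ u', w₁ u u' = D) (hD2 : ∑ u, ∑ u', w₂ u u' = D) :
    sInf {x : ℝ | ∃ (lam : U × U → ℝ) (R : U × U → U × U → ℝ),
        IsTCStat (fun u u' => w₁ u u' / ∑ a, w₁ u a)
          (fun u u' => w₂ u u' / ∑ a, w₂ u a)
          (fun u => (∑ u', w₁ u u') / D) (fun u => (∑ u', w₂ u u') / D) lam R ∧
        x = ∑ a : U × U, lam a * (if a.1 = a.2 then (0 : ℝ) else 1)}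
    ≥ (1 / (4 * D)) * ∑ u, ∑ u', |w₁ u u' - w₂ u u'| :=
  netotc_weight_lower_bound_general w₁ w₂ D h1nn h2nn h1sym h2sym h1deg h2deg hD1 hD2
end

section
/- If the cost function c: U×U → ℝ₊ is a metric on U, then ρ(G₁,G₂) = 0 implies G₁ ∼ G₂ (the networks have identical random walks), and ρ satisfies symmetry and the triangle inequality; hence ρ is a metric on equivalence classes of connected undirected networks under ∼. -/
/-- The NetOTC cost `ρ(G₁,G₂)` for undirected networks with weight functions `w₁, w₂`
on a common vertex set `U` and cost `c`: the minimal expected cost over stationary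
transition couplings of the associated random walks (which have kernels
`wᵢ(u,u')/dᵢ(u)` and stationary distributions `dᵢ(u)/Dᵢ`). -/
noncomputable def netOTC {U : Type*} [Fintype U]
    (w₁ w₂ : U → U → ℝ) (c : U → U → ℝ) : ℝ :=
  sInf {x : ℝ | ∃ (lam : U × U → ℝ) (R : U × U → U × U → ℝ),
      IsTCStat (fun u u' => w₁ u u' / ∑ a, w₁ u a)
        (fun u u' => w₂ u u' / ∑ a, w₂ u a)
        (fun u => (∑ u', w₁ u u') / ∑ a, ∑ b, w₁ a b)
        (fun u => (∑ u', w₂ u u') / ∑ a, ∑ b, w₂ a b) lam R ∧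
      x = ∑ a : U × U, lam a * c a.1 a.2}

open Filter Topology Finset Matrix

theorem ContinuousLinearMap.exists_mem_fixed_of_isCompact_of_convex
    {E : Type*} [NormedAddCommGroup E] [NormedSpace ℝ E] (T : E →L[ℝ] E) {S : Set E}
    (hS : IsCompact S) (hSconv : Convex ℝ S) (hSne : S.Nonempty) (hTS : Set.MapsTo T S S) :
    ∃ x ∈ S, T x = x := by
  obtain ⟨x₀, hx₀⟩ := hSne
  obtain ⟨C, hC⟩ := hS.isBounded.exists_norm_le
  set avg : ℕ → E := fun N => ∑ n ∈ range (N + 1), ((N : ℝ) + 1)⁻¹ • T^[n] x₀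
  have havg_mem : ∀ N, avg N ∈ S := fun N =>
    hSconv.sum_mem (fun _ _ => by positivity) (by simp [field]) fun n _ => hTS.iterate n hx₀
  have hdefect : ∀ N, T (avg N) - avg N = ((N : ℝ) + 1)⁻¹ • (T^[N + 1] x₀ - x₀) := by
    intro N
    simp only [avg, map_sum, map_smul, ← Function.iterate_succ_apply' T, ← sum_sub_distrib,
      ← smul_sub, ← smul_sum, sum_range_sub (fun n => T^[n] x₀)]
    rfl
  have hdefect_lim : Tendsto (fun N => T (avg N) - avg N) atTop (𝓝 0) := by
    refine squeeze_zero_norm (fun N => ?_)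
      (by simpa using (tendsto_one_div_add_atTop_nhds_zero_nat (𝕜 := ℝ)).mul_const (C + C))
    rw [hdefect, norm_smul, norm_inv, Real.norm_of_nonneg (by positivity)]
    gcongr
    exact (norm_sub_le _ _).trans (add_le_add (hC _ (hTS.iterate _ hx₀)) (hC _ hx₀))
  obtain ⟨x, hxS, φ, hφ, hlim⟩ := hS.tendsto_subseq havg_mem
  refine ⟨x, hxS, sub_eq_zero.mp (tendsto_nhds_unique ?_ (hdefect_lim.comp hφ.tendsto_atTop))⟩
  exact ((T.continuous.tendsto x).comp hlim).sub hlim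

section Couplings

variable {U V : Type*} [Fintype U] [Fintype V] {P : U → U → ℝ} {Q : V → V → ℝ}
  {p : U → ℝ} {q : V → ℝ} {lam : U × V → ℝ} {R : U × V → U × V → ℝ}

def tcCosts (P : U → U → ℝ) (Q : V → V → ℝ) (p : U → ℝ) (q : V → ℝ) (c : U → V → ℝ) :
    Set ℝ :=
  {x | ∃ lam R, IsTCStat P Q p q lam R ∧ x = ∑ a, lam a * c a.1 a.2}

lemma IsTCStat.swap (h : IsTCStat P Q p q lam R) :
    IsTCStat Q P q p (fun a => lam a.swap) (fun a b => R a.swap b.swap) := by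
  obtain ⟨hR, hRP, hRQ, hlam, hsum, hstat, hp, hq⟩ := h
  refine ⟨fun a b => hR _ _, fun a v' => hRQ a.swap v', fun a u' => hRP a.swap u',
    fun a => hlam _, ?_, fun b => ?_, hq, hp⟩
  all_goals beta_reduce
  · rw [← hsum]
    exact Fintype.sum_equiv (Equiv.prodComm V U) _ _ fun _ => rfl
  · rw [← hstat b.swap]
    exact Fintype.sum_equiv (Equiv.prodComm V U) _ _ fun _ => rfl

lemma tcCosts_subset_swap (c : U → V → ℝ) :
    tcCosts P Q p q c ⊆ tcCosts Q P q p fun v u => c u v := by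
  rintro _ ⟨lam, R, h, rfl⟩
  exact ⟨_, _, h.swap, (Fintype.sum_equiv (Equiv.prodComm V U) _ _ fun _ => rfl).symm⟩

lemma isTCStat_prod (hP : ∀ u u', 0 ≤ P u u') (hQ : ∀ v v', 0 ≤ Q v v')
    (hProw : ∀ u, ∑ u', P u u' = 1) (hQrow : ∀ v, ∑ v', Q v v' = 1)
    (hp : ∀ u, 0 ≤ p u) (hq : ∀ v, 0 ≤ q v) (hpsum : ∑ u, p u = 1) (hqsum : ∑ v, q v = 1)
    (hpstat : ∀ u', ∑ u, p u * P u u' = p u') (hqstat : ∀ v', ∑ v, q v * Q v v' = q v') :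
    IsTCStat P Q p q (fun a => p a.1 * q a.2) (fun a b => P a.1 b.1 * Q a.2 b.2) := by
  refine ⟨fun a b => mul_nonneg (hP _ _) (hQ _ _), fun a u' => ?_, fun a v' => ?_,
    fun a => mul_nonneg (hp _) (hq _), ?_, fun b => ?_, fun u => ?_, fun v => ?_⟩
  all_goals dsimp only
  · rw [← mul_sum, hQrow, mul_one]
  · rw [← sum_mul, hProw, one_mul]
  · rw [Fintype.sum_prod_type, ← sum_mul_sum, hpsum, hqsum, one_mul]
  · calc ∑ a : U × V, p a.1 * q a.2 * (P a.1 b.1 * Q a.2 b.2)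
        = ∑ u, ∑ v, p u * P u b.1 * (q v * Q v b.2) := by
          rw [Fintype.sum_prod_type]
          exact sum_congr rfl fun _ _ => sum_congr rfl fun _ _ => by ring
      _ = p b.1 * q b.2 := by rw [← sum_mul_sum, hpstat, hqstat]
  · rw [← mul_sum, hqsum, mul_one]
  · rw [← sum_mul, hpsum, one_mul]

lemma isCompact_setOf_isTCStat :
    IsCompact {z : (U × V → ℝ) × (U × V → U × V → ℝ) | IsTCStat P Q p q z.1 z.2} := by
  refine (isCompact_Icc (a := (0, 0)) (b := (1, fun a b => P a.1 b.1))).of_isClosed_subset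
    ?_ ?_
  · simp only [IsTCStat, Set.ofPred_and, Set.ofPred_forall]
    repeat' first
      | apply IsClosed.inter
      | (apply isClosed_iInter; intro)
      | exact isClosed_le (by fun_prop) (by fun_prop)
      | exact isClosed_eq (by fun_prop) (by fun_prop)
  · rintro ⟨lam, R⟩ ⟨hR, hRP, -, hlam, hsum, -⟩
    refine ⟨⟨hlam, hR⟩, fun a => ?_, fun a b => ?_⟩
    · change lam a ≤ 1
      exact hsum ▸ single_le_sum (fun a _ => hlam a) (mem_univ a)
    · change R a b ≤ P a.1 b.1
      exact hRP a b.1 ▸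
        single_le_sum (f := fun v' => R a (b.1, v')) (fun _ _ => hR _ _) (mem_univ b.2)

lemma isLeast_sInf_tcCosts (hne : ∃ lam R, IsTCStat P Q p q lam R) (c : U → V → ℝ) :
    IsLeast (tcCosts P Q p q c) (sInf (tcCosts P Q p q c)) := by
  obtain ⟨lam₀, R₀, h₀⟩ := hne
  obtain ⟨⟨lam, R⟩, h, hmin⟩ := isCompact_setOf_isTCStat.exists_isMinOn ⟨(lam₀, R₀), h₀⟩
    (f := fun z => ∑ a, z.1 a * c a.1 a.2) (by fun_prop : Continuous _).continuousOn
  have hleast : IsLeast (tcCosts P Q p q c) (∑ a, lam a * c a.1 a.2) :=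
    ⟨⟨lam, R, h, rfl⟩, by rintro _ ⟨lam', R', h', rfl⟩; exact isMinOn_iff.mp hmin (lam', R') h'⟩
  rwa [hleast.csInf_eq]

end Couplings

section Diagonal

variable {U : Type*} [Fintype U] {P Q : U → U → ℝ} {p q : U → ℝ} {lam : U × U → ℝ}
  {R : U × U → U × U → ℝ}

lemma eq_zero_of_sum_mul_eq_zero {c : U → U → ℝ} (hlam : ∀ a, 0 ≤ lam a)
    (hc : ∀ u v, 0 ≤ c u v) (hceq : ∀ u v, c u v = 0 → u = v)
    (hcost : ∑ a, lam a * c a.1 a.2 = 0) {x y : U} (hxy : x ≠ y) : lam (x, y) = 0 := by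
  have := (sum_eq_zero_iff_of_nonneg fun a _ => mul_nonneg (hlam a) (hc _ _)).mp hcost (x, y)
    (mem_univ _)
  exact (mul_eq_zero.mp this).resolve_right fun h => hxy (hceq x y h)

-- Stationarity forces a coupling supported on the diagonal to move along the diagonal.
lemma IsTCStat.eq_of_forall_ne_eq_zero (h : IsTCStat P Q p q lam R) (hp : ∀ u, 0 < p u)
    (hlam : ∀ {x y}, x ≠ y → lam (x, y) = 0) : p = q ∧ P = Q := by
  obtain ⟨hR, hRP, hRQ, hlamnn, -, hstat, hlp, hlq⟩ := h
  have hdiag_p : ∀ u, lam (u, u) = p u := fun u =>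
    (Fintype.sum_eq_single u fun _ hv => hlam (Ne.symm hv)).symm.trans (hlp u)
  have hdiag_q : ∀ u, lam (u, u) = q u := fun u =>
    (Fintype.sum_eq_single u fun _ hv => hlam hv).symm.trans (hlq u)
  have hRdiag : ∀ {u x y}, x ≠ y → R (u, u) (x, y) = 0 := by
    intro u x y hxy
    have hle : lam (u, u) * R (u, u) (x, y) ≤ lam (x, y) := hstat (x, y) ▸
      single_le_sum (f := fun a => lam a * R a (x, y))
        (fun a _ => mul_nonneg (hlamnn a) (hR a _)) (mem_univ (u, u))
    rw [hlam hxy, hdiag_p, ← mul_zero (p u)] at hle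
    exact le_antisymm (le_of_mul_le_mul_left hle (hp u)) (hR _ _)
  refine ⟨funext fun u => (hdiag_p u).symm.trans (hdiag_q u), funext₂ fun u u' => ?_⟩
  calc P u u' = ∑ v', R (u, u) (u', v') := (hRP (u, u) u').symm
    _ = R (u, u) (u', u') := Fintype.sum_eq_single u' fun _ hv => hRdiag (Ne.symm hv)
    _ = ∑ x, R (u, u) (x, u') := (Fintype.sum_eq_single u' fun _ hv => hRdiag hv).symm
    _ = Q u u' := hRQ (u, u) u'

end Diagonal

section Marginals

variable {U V W : Type*}

def marginal₁₂ [Fintype W] (μ : U × V × W → ℝ) : U × V → ℝ := fun y => ∑ w, μ (y.1, y.2, w)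

def marginal₂₃ [Fintype U] (μ : U × V × W → ℝ) : V × W → ℝ := fun y => ∑ u, μ (u, y)

def marginal₁₃ [Fintype V] (μ : U × V × W → ℝ) : U × W → ℝ := fun y => ∑ v, μ (y.1, v, y.2)

lemma sum_marginal₁₃_eq_sum_marginal₁₂ [Fintype V] [Fintype W] (μ : U × V × W → ℝ) (u : U) :
    ∑ w, marginal₁₃ μ (u, w) = ∑ v, marginal₁₂ μ (u, v) :=
  sum_comm

lemma sum_marginal₁₃_eq_sum_marginal₂₃ [Fintype U] [Fintype V] (μ : U × V × W → ℝ) (w : W) :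
    ∑ u, marginal₁₃ μ (u, w) = ∑ v, marginal₂₃ μ (v, w) :=
  sum_comm

section Sums

variable [Fintype U] [Fintype V] [Fintype W]

lemma sum_sum_mid_eq_sum (f : U × V × W → ℝ) :
    ∑ y : U × W, ∑ v, f (y.1, v, y.2) = ∑ x, f x := by
  simp only [Fintype.sum_prod_type]
  exact sum_congr rfl fun u _ => sum_comm

lemma sum_marginal₁₂_mul (μ : U × V × W → ℝ) (h : U × V → ℝ) :
    ∑ y, marginal₁₂ μ y * h y = ∑ x, μ x * h (x.1, x.2.1) := by
  simp only [marginal₁₂, sum_mul, Fintype.sum_prod_type]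

lemma sum_marginal₂₃_mul (μ : U × V × W → ℝ) (h : V × W → ℝ) :
    ∑ y, marginal₂₃ μ y * h y = ∑ x, μ x * h x.2 := by
  rw [Fintype.sum_prod_type (fun x : U × V × W => μ x * h x.2), sum_comm]
  simp only [marginal₂₃, sum_mul]

lemma sum_marginal₁₃_mul (μ : U × V × W → ℝ) (h : U × W → ℝ) :
    ∑ y, marginal₁₃ μ y * h y = ∑ x, μ x * h (x.1, x.2.2) := by
  simp only [marginal₁₃, sum_mul]
  exact sum_sum_mid_eq_sum fun x => μ x * h (x.1, x.2.2)

lemma sum_marginal₁₂ (μ : U × V × W → ℝ) : ∑ y, marginal₁₂ μ y = ∑ x, μ x := by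
  simpa using sum_marginal₁₂_mul μ 1

lemma marginal₁₂_vecMul (μ : U × V × W → ℝ) (K : U × V × W → U × V × W → ℝ) :
    marginal₁₂ (μ ᵥ* K) = fun y => ∑ a, μ a * marginal₁₂ (K a) y := by
  ext y
  simp only [marginal₁₂, vecMul, dotProduct, mul_sum]
  exact sum_comm

lemma marginal₂₃_vecMul (μ : U × V × W → ℝ) (K : U × V × W → U × V × W → ℝ) :
    marginal₂₃ (μ ᵥ* K) = fun y => ∑ a, μ a * marginal₂₃ (K a) y := by
  ext y
  simp only [marginal₂₃, vecMul, dotProduct, mul_sum]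
  exact sum_comm

lemma marginal₁₃_vecMul (μ : U × V × W → ℝ) (K : U × V × W → U × V × W → ℝ) :
    marginal₁₃ (μ ᵥ* K) = fun y => ∑ a, μ a * marginal₁₃ (K a) y := by
  ext y
  simp only [marginal₁₃, vecMul, dotProduct, mul_sum]
  exact sum_comm

lemma sum_marginal₁₃_mul_le {c : U → U → ℝ} (hc : ∀ u v w, c u w ≤ c u v + c v w)
    {μ : U × U × U → ℝ} (hμ : 0 ≤ μ) :
    ∑ y, marginal₁₃ μ y * c y.1 y.2 ≤
      ∑ y, marginal₁₂ μ y * c y.1 y.2 + ∑ y, marginal₂₃ μ y * c y.1 y.2 := by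
  rw [sum_marginal₁₃_mul μ fun y => c y.1 y.2, sum_marginal₁₂_mul μ fun y => c y.1 y.2,
    sum_marginal₂₃_mul μ fun y => c y.1 y.2, ← sum_add_distrib]
  exact sum_le_sum fun x _ =>
    (mul_le_mul_of_nonneg_left (hc _ _ _) (hμ x)).trans_eq (mul_add _ _ _)

end Sums

-- Where `m v = 0`, the marginal conditions below force `α (·, v) = 0` and `β (v, ·) = 0`,
-- so the junk value `x / 0 = 0` does no harm.
noncomputable def glue (α : U × V → ℝ) (β : V × W → ℝ) (m : V → ℝ) : U × V × W → ℝ :=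
  fun x => α (x.1, x.2.1) * β x.2 / m x.2.1

variable {α : U × V → ℝ} {β : V × W → ℝ} {m : V → ℝ}

lemma glue_nonneg [Fintype W] (hα : 0 ≤ α) (hβ : 0 ≤ β) (hβm : ∀ v, ∑ w, β (v, w) = m v) :
    0 ≤ glue α β m := fun x =>
  div_nonneg (mul_nonneg (hα _) (hβ _)) ((hβm x.2.1) ▸ sum_nonneg fun _ _ => hβ _)

lemma marginal₁₂_glue [Fintype U] [Fintype W] (hα : 0 ≤ α) (hαm : ∀ v, ∑ u, α (u, v) = m v)
    (hβm : ∀ v, ∑ w, β (v, w) = m v) : marginal₁₂ (glue α β m) = α := by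
  ext ⟨u, v⟩
  simp only [marginal₁₂, glue, ← sum_div, ← mul_sum, hβm]
  rcases eq_or_ne (m v) 0 with hv | hv
  · rw [hv, div_zero, ((sum_eq_zero_iff_of_nonneg fun u _ => hα (u, v)).mp
      ((hαm v).trans hv) u (mem_univ u))]
  · exact mul_div_cancel_right₀ _ hv

lemma marginal₂₃_glue [Fintype U] [Fintype W] (hβ : 0 ≤ β) (hαm : ∀ v, ∑ u, α (u, v) = m v)
    (hβm : ∀ v, ∑ w, β (v, w) = m v) : marginal₂₃ (glue α β m) = β := by
  ext ⟨v, w⟩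
  simp only [marginal₂₃, glue, ← sum_div, ← sum_mul, hαm]
  rcases eq_or_ne (m v) 0 with hv | hv
  · rw [hv, div_zero, ((sum_eq_zero_iff_of_nonneg fun w _ => hβ (v, w)).mp
      ((hβm v).trans hv) w (mem_univ w))]
  · exact mul_div_cancel_left₀ _ hv

end Marginals

section Lumping

variable {U V W : Type*} [Fintype V] [Nonempty V]

-- On a row where the (1,3)-marginal vanishes any coupling of the right rows will do.
noncomputable def lumpKernel (μ : U × V × W → ℝ) (K : U × V × W → U × W → ℝ) :
    U × W → U × W → ℝ :=
  fun y b => if marginal₁₃ μ y = 0 then K (y.1, Classical.arbitrary V, y.2) b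
    else (∑ v, μ (y.1, v, y.2) * K (y.1, v, y.2) b) / marginal₁₃ μ y

variable {μ : U × V × W → ℝ} {K : U × V × W → U × W → ℝ}

lemma marginal₁₃_mul_lumpKernel (hμ : 0 ≤ μ) (y b : U × W) :
    marginal₁₃ μ y * lumpKernel μ K y b = ∑ v, μ (y.1, v, y.2) * K (y.1, v, y.2) b := by
  unfold lumpKernel
  split_ifs with h
  · have hμy := (sum_eq_zero_iff_of_nonneg fun v _ => hμ (y.1, v, y.2)).mp h
    simp [h, hμy]
  · exact mul_div_cancel₀ _ h

lemma isTCStat_lumpKernel [Fintype U] [Fintype W] {P : U → U → ℝ} {Q : W → W → ℝ}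
    {p : U → ℝ} {q : W → ℝ} (hK : ∀ a b, 0 ≤ K a b)
    (hKP : ∀ a u', ∑ w', K a (u', w') = P a.1 u') (hKQ : ∀ a w', ∑ u', K a (u', w') = Q a.2.2 w')
    (hμ : 0 ≤ μ) (hμsum : ∑ x, μ x = 1) (hμstat : ∀ b, ∑ a, μ a * K a b = marginal₁₃ μ b)
    (hp : ∀ u, ∑ w, marginal₁₃ μ (u, w) = p u) (hq : ∀ w, ∑ u, marginal₁₃ μ (u, w) = q w) :
    IsTCStat P Q p q (marginal₁₃ μ) (lumpKernel μ K) := by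
  have hmarg : ∀ y, 0 ≤ marginal₁₃ μ y := fun y => sum_nonneg fun v _ => hμ _
  refine ⟨fun y b => ?_, fun y u' => ?_, fun y w' => ?_, hmarg,
    (sum_sum_mid_eq_sum μ).trans hμsum, fun b => ?_, hp, hq⟩
  · unfold lumpKernel
    split_ifs
    exacts [hK _ _, div_nonneg (sum_nonneg fun v _ => mul_nonneg (hμ _) (hK _ _)) (hmarg y)]
  · by_cases h : marginal₁₃ μ y = 0
    · simp only [lumpKernel, h, if_true]
      exact hKP _ u'
    · refine mul_left_cancel₀ h ?_
      simp only [mul_sum, marginal₁₃_mul_lumpKernel hμ]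
      rw [sum_comm]
      simp only [← mul_sum, hKP, ← sum_mul]
      rfl
  · by_cases h : marginal₁₃ μ y = 0
    · simp only [lumpKernel, h, if_true]
      exact hKQ _ w'
    · refine mul_left_cancel₀ h ?_
      simp only [mul_sum, marginal₁₃_mul_lumpKernel hμ]
      rw [sum_comm]
      simp only [← mul_sum, hKQ, ← sum_mul]
      rfl
  · simp only [marginal₁₃_mul_lumpKernel hμ]
    exact (sum_sum_mid_eq_sum fun a => μ a * K a b).trans (hμstat b)

end Lumping

section Gluing

variable {U V W : Type*}

def gluings [Fintype U] [Fintype W] (lam₁₂ : U × V → ℝ) (lam₂₃ : V × W → ℝ) :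
    Set (U × V × W → ℝ) :=
  {μ | 0 ≤ μ ∧ marginal₁₂ μ = lam₁₂ ∧ marginal₂₃ μ = lam₂₃}

lemma isCompact_gluings [Fintype U] [Fintype W] (lam₁₂ : U × V → ℝ) (lam₂₃ : V × W → ℝ) :
    IsCompact (gluings lam₁₂ lam₂₃) := by
  refine (isCompact_Icc (a := 0) (b := fun x => lam₁₂ (x.1, x.2.1))).of_isClosed_subset ?_ ?_
  · refine isClosed_Ici.inter
      ((isClosed_eq ?_ continuous_const).inter (isClosed_eq ?_ continuous_const))
      <;> exact continuous_pi fun _ => continuous_finsetSum _ fun _ _ => continuous_apply _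
  · rintro μ ⟨hμ, hμ₁₂, -⟩
    refine ⟨hμ, fun x => ?_⟩
    rw [← hμ₁₂]
    exact single_le_sum (f := fun w => μ (x.1, x.2.1, w)) (fun w _ => hμ _) (mem_univ x.2.2)

lemma convex_gluings [Fintype U] [Fintype W] (lam₁₂ : U × V → ℝ) (lam₂₃ : V × W → ℝ) :
    Convex ℝ (gluings lam₁₂ lam₂₃) := by
  rintro μ ⟨hμ, hμ₁₂, hμ₂₃⟩ ν ⟨hν, hν₁₂, hν₂₃⟩ a b ha hb hab
  refine ⟨add_nonneg (smul_nonneg ha hμ) (smul_nonneg hb hν), ?_, ?_⟩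
  · ext y
    change ∑ w, (a * μ (y.1, y.2, w) + b * ν (y.1, y.2, w)) = _
    rw [sum_add_distrib, ← mul_sum, ← mul_sum]
    change a * marginal₁₂ μ y + b * marginal₁₂ ν y = _
    rw [hμ₁₂, hν₁₂, ← add_mul, hab, one_mul]
  · ext y
    change ∑ u, (a * μ (u, y) + b * ν (u, y)) = _
    rw [sum_add_distrib, ← mul_sum, ← mul_sum]
    change a * marginal₂₃ μ y + b * marginal₂₃ ν y = _
    rw [hμ₂₃, hν₂₃, ← add_mul, hab, one_mul]

noncomputable def glueKernel (R₁₂ : U × V → U × V → ℝ) (R₂₃ : V × W → V × W → ℝ)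
    (P : V → V → ℝ) : U × V × W → U × V × W → ℝ :=
  fun a => glue (R₁₂ (a.1, a.2.1)) (R₂₃ a.2) (P a.2.1)

variable [Fintype U] [Fintype V] [Fintype W] {P₁ : U → U → ℝ} {P₂ : V → V → ℝ}
  {P₃ : W → W → ℝ} {p₁ : U → ℝ} {p₂ : V → ℝ} {p₃ : W → ℝ} {lam₁₂ : U × V → ℝ}
  {lam₂₃ : V × W → ℝ} {R₁₂ : U × V → U × V → ℝ} {R₂₃ : V × W → V × W → ℝ}

lemma glueKernel_nonneg (h₁₂ : IsTCStat P₁ P₂ p₁ p₂ lam₁₂ R₁₂)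
    (h₂₃ : IsTCStat P₂ P₃ p₂ p₃ lam₂₃ R₂₃) (a : U × V × W) : 0 ≤ glueKernel R₁₂ R₂₃ P₂ a := by
  obtain ⟨hR₁₂, -⟩ := h₁₂
  obtain ⟨hR₂₃, hR₂₃P, -⟩ := h₂₃
  exact glue_nonneg (hR₁₂ _) (hR₂₃ _) (hR₂₃P a.2)

lemma marginal₁₂_glueKernel (h₁₂ : IsTCStat P₁ P₂ p₁ p₂ lam₁₂ R₁₂)
    (h₂₃ : IsTCStat P₂ P₃ p₂ p₃ lam₂₃ R₂₃) (a : U × V × W) :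
    marginal₁₂ (glueKernel R₁₂ R₂₃ P₂ a) = R₁₂ (a.1, a.2.1) := by
  obtain ⟨hR₁₂, -, hR₁₂Q, -⟩ := h₁₂
  obtain ⟨-, hR₂₃P, -⟩ := h₂₃
  exact marginal₁₂_glue (hR₁₂ _) (hR₁₂Q _) (hR₂₃P a.2)

lemma marginal₂₃_glueKernel (h₁₂ : IsTCStat P₁ P₂ p₁ p₂ lam₁₂ R₁₂)
    (h₂₃ : IsTCStat P₂ P₃ p₂ p₃ lam₂₃ R₂₃) (a : U × V × W) :
    marginal₂₃ (glueKernel R₁₂ R₂₃ P₂ a) = R₂₃ a.2 := by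
  obtain ⟨-, -, hR₁₂Q, -⟩ := h₁₂
  obtain ⟨hR₂₃, hR₂₃P, -⟩ := h₂₃
  exact marginal₂₃_glue (hR₂₃ _) (hR₁₂Q _) (hR₂₃P a.2)

lemma mapsTo_vecMul_glueKernel (h₁₂ : IsTCStat P₁ P₂ p₁ p₂ lam₁₂ R₁₂)
    (h₂₃ : IsTCStat P₂ P₃ p₂ p₃ lam₂₃ R₂₃) :
    Set.MapsTo (fun μ => μ ᵥ* glueKernel R₁₂ R₂₃ P₂) (gluings lam₁₂ lam₂₃)
      (gluings lam₁₂ lam₂₃) := by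
  have hK := glueKernel_nonneg h₁₂ h₂₃
  have hK₁₂ := marginal₁₂_glueKernel h₁₂ h₂₃
  have hK₂₃ := marginal₂₃_glueKernel h₁₂ h₂₃
  obtain ⟨-, -, -, -, -, hstat₁₂, -⟩ := h₁₂
  obtain ⟨-, -, -, -, -, hstat₂₃, -⟩ := h₂₃
  rintro μ ⟨hμ, hμ₁₂, hμ₂₃⟩
  refine ⟨fun b => sum_nonneg fun a _ => mul_nonneg (hμ a) (hK a b), ?_, ?_⟩
  · ext y
    simp only [marginal₁₂_vecMul, hK₁₂, ← sum_marginal₁₂_mul μ (fun y' => R₁₂ y' y), hμ₁₂,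
      hstat₁₂]
  · ext y
    simp only [marginal₂₃_vecMul, hK₂₃, ← sum_marginal₂₃_mul μ (fun y' => R₂₃ y' y), hμ₂₃,
      hstat₂₃]

lemma exists_mem_gluings_vecMul_glueKernel_eq (h₁₂ : IsTCStat P₁ P₂ p₁ p₂ lam₁₂ R₁₂)
    (h₂₃ : IsTCStat P₂ P₃ p₂ p₃ lam₂₃ R₂₃) :
    ∃ μ ∈ gluings lam₁₂ lam₂₃, μ ᵥ* glueKernel R₁₂ R₂₃ P₂ = μ := by
  have hglue : glue lam₁₂ lam₂₃ p₂ ∈ gluings lam₁₂ lam₂₃ := by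
    obtain ⟨-, -, -, hlam₁₂, -, -, -, hq₁₂⟩ := h₁₂
    obtain ⟨-, -, -, hlam₂₃, -, -, hp₂₃, -⟩ := h₂₃
    exact ⟨glue_nonneg hlam₁₂ hlam₂₃ hp₂₃, marginal₁₂_glue hlam₁₂ hq₁₂ hp₂₃,
      marginal₂₃_glue hlam₂₃ hq₁₂ hp₂₃⟩
  exact (vecMulLinear (glueKernel R₁₂ R₂₃ P₂)).toContinuousLinearMap
    |>.exists_mem_fixed_of_isCompact_of_convex (isCompact_gluings _ _) (convex_gluings _ _)
      ⟨_, hglue⟩ (mapsTo_vecMul_glueKernel h₁₂ h₂₃)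

theorem IsTCStat.exists_glue [Nonempty V] (h₁₂ : IsTCStat P₁ P₂ p₁ p₂ lam₁₂ R₁₂)
    (h₂₃ : IsTCStat P₂ P₃ p₂ p₃ lam₂₃ R₂₃) :
    ∃ μ ∈ gluings lam₁₂ lam₂₃, ∃ R, IsTCStat P₁ P₃ p₁ p₃ (marginal₁₃ μ) R := by
  obtain ⟨μ, ⟨hμ, hμ₁₂, hμ₂₃⟩, hfix⟩ := exists_mem_gluings_vecMul_glueKernel_eq h₁₂ h₂₃
  set K := glueKernel R₁₂ R₂₃ P₂
  have hK : ∀ a b, 0 ≤ marginal₁₃ (K a) b := fun a _ =>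
    sum_nonneg fun _ _ => glueKernel_nonneg h₁₂ h₂₃ a _
  have hK₁₂ := marginal₁₂_glueKernel h₁₂ h₂₃
  have hK₂₃ := marginal₂₃_glueKernel h₁₂ h₂₃
  obtain ⟨-, hR₁₂P, -, -, hsum₁₂, -, hp₁₂, -⟩ := h₁₂
  obtain ⟨-, -, hR₂₃Q, -, -, -, -, hq₂₃⟩ := h₂₃
  refine ⟨μ, ⟨hμ, hμ₁₂, hμ₂₃⟩, lumpKernel μ fun a => marginal₁₃ (K a),
    isTCStat_lumpKernel hK (fun a u' => ?_) (fun a w' => ?_) hμ ?_ (fun b => ?_)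
      (fun u => ?_) (fun w => ?_)⟩
  · rw [sum_marginal₁₃_eq_sum_marginal₁₂, hK₁₂, hR₁₂P]
  · rw [sum_marginal₁₃_eq_sum_marginal₂₃, hK₂₃, hR₂₃Q]
  · rw [← sum_marginal₁₂, hμ₁₂, hsum₁₂]
  · rw [← congrFun (marginal₁₃_vecMul μ K) b, hfix]
  · rw [sum_marginal₁₃_eq_sum_marginal₁₂, hμ₁₂, hp₁₂]
  · rw [sum_marginal₁₃_eq_sum_marginal₂₃, hμ₂₃, hq₂₃]

end Gluing

section RandomWalk

variable {U : Type*} [Fintype U] {w w₁ w₂ w₃ : U → U → ℝ}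

noncomputable def walkKernel (w : U → U → ℝ) : U → U → ℝ := fun u u' => w u u' / ∑ a, w u a

noncomputable def walkStationary (w : U → U → ℝ) : U → ℝ :=
  fun u => (∑ u', w u u') / ∑ a, ∑ b, w a b

lemma walkKernel_nonneg (hnn : ∀ u u', 0 ≤ w u u') (u u' : U) : 0 ≤ walkKernel w u u' :=
  div_nonneg (hnn u u') (sum_nonneg fun a _ => hnn u a)

lemma sum_walkKernel (hdeg : ∀ u, 0 < ∑ u', w u u') (u : U) : ∑ u', walkKernel w u u' = 1 := by
  simp only [walkKernel, ← sum_div, div_self (hdeg u).ne']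

lemma total_weight_pos [Nonempty U] (hdeg : ∀ u, 0 < ∑ u', w u u') : 0 < ∑ a, ∑ b, w a b :=
  sum_pos (fun a _ => hdeg a) univ_nonempty

lemma walkStationary_pos [Nonempty U] (hdeg : ∀ u, 0 < ∑ u', w u u') (u : U) :
    0 < walkStationary w u :=
  div_pos (hdeg u) (total_weight_pos hdeg)

lemma sum_walkStationary [Nonempty U] (hdeg : ∀ u, 0 < ∑ u', w u u') :
    ∑ u, walkStationary w u = 1 := by
  simp only [walkStationary, ← sum_div, div_self (total_weight_pos hdeg).ne']

lemma sum_walkStationary_mul_walkKernel (hsym : ∀ u u', w u u' = w u' u)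
    (hdeg : ∀ u, 0 < ∑ u', w u u') (u' : U) :
    ∑ u, walkStationary w u * walkKernel w u u' = walkStationary w u' := by
  have hterm : ∀ u, walkStationary w u * walkKernel w u u' = w u' u / ∑ a, ∑ b, w a b := by
    intro u
    rw [walkStationary, walkKernel, div_mul_div_comm, mul_comm (∑ x, w u x), hsym,
      mul_div_mul_right _ _ (hdeg u).ne']
  rw [sum_congr rfl fun u _ => hterm u, ← sum_div]
  rfl

lemma total_weight_mul_walkStationary_mul_walkKernel [Nonempty U]
    (hdeg : ∀ u, 0 < ∑ u', w u u') (u u' : U) :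
    (∑ a, ∑ b, w a b) * (walkStationary w u * walkKernel w u u') = w u u' := by
  have htotal := (total_weight_pos hdeg).ne'
  rw [walkStationary, walkKernel]
  field_simp [(hdeg u).ne']

lemma exists_pos_mul_eq_of_walk_eq [Nonempty U] (h₁deg : ∀ u, 0 < ∑ u', w₁ u u')
    (h₂deg : ∀ u, 0 < ∑ u', w₂ u u') (hπ : walkStationary w₁ = walkStationary w₂)
    (hP : walkKernel w₁ = walkKernel w₂) : ∃ C > (0 : ℝ), ∀ u u', w₁ u u' = C * w₂ u u' := by
  have hD₂ := (total_weight_pos h₂deg).ne'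
  refine ⟨(∑ a, ∑ b, w₁ a b) / ∑ a, ∑ b, w₂ a b,
    div_pos (total_weight_pos h₁deg) (total_weight_pos h₂deg), fun u u' => ?_⟩
  rw [← total_weight_mul_walkStationary_mul_walkKernel h₁deg u u',
    ← total_weight_mul_walkStationary_mul_walkKernel h₂deg u u', hπ, hP]
  field_simp

def IsUndirectedNetwork (w : U → U → ℝ) : Prop :=
  (∀ u u', 0 ≤ w u u') ∧ (∀ u u', w u u' = w u' u) ∧ ∀ u, 0 < ∑ u', w u u'

lemma netOTC_eq_sInf_tcCosts (c : U → U → ℝ) :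
    netOTC w₁ w₂ c = sInf (tcCosts (walkKernel w₁) (walkKernel w₂)
      (walkStationary w₁) (walkStationary w₂) c) :=
  rfl

lemma netOTC_of_isEmpty [IsEmpty U] (c : U → U → ℝ) : netOTC w₁ w₂ c = 0 := by
  rw [netOTC_eq_sInf_tcCosts]
  convert Real.sInf_empty
  refine Set.eq_empty_of_forall_notMem ?_
  rintro _ ⟨_, _, ⟨-, -, -, -, hsum, -⟩, -⟩
  simp at hsum

theorem netOTC_comm {c : U → U → ℝ} (hcsym : ∀ u v, c u v = c v u) (w₁ w₂ : U → U → ℝ) :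
    netOTC w₁ w₂ c = netOTC w₂ w₁ c := by
  have hflip : (fun v u => c u v) = c := funext₂ fun v u => hcsym u v
  have hsub : ∀ w w' : U → U → ℝ, tcCosts (walkKernel w) (walkKernel w') (walkStationary w)
      (walkStationary w') c ⊆ tcCosts (walkKernel w') (walkKernel w) (walkStationary w')
      (walkStationary w) c := fun w w' => by
    simpa only [hflip] using tcCosts_subset_swap (P := walkKernel w) (Q := walkKernel w')
      (p := walkStationary w) (q := walkStationary w') c
  exact congrArg sInf (subset_antisymm (hsub w₁ w₂) (hsub w₂ w₁))

theorem isLeast_netOTC [Nonempty U] (c : U → U → ℝ) (h₁ : IsUndirectedNetwork w₁)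
    (h₂ : IsUndirectedNetwork w₂) :
    IsLeast (tcCosts (walkKernel w₁) (walkKernel w₂) (walkStationary w₁) (walkStationary w₂) c)
      (netOTC w₁ w₂ c) := by
  obtain ⟨h₁nn, h₁sym, h₁deg⟩ := h₁
  obtain ⟨h₂nn, h₂sym, h₂deg⟩ := h₂
  exact isLeast_sInf_tcCosts ⟨_, _, isTCStat_prod (walkKernel_nonneg h₁nn)
    (walkKernel_nonneg h₂nn) (sum_walkKernel h₁deg) (sum_walkKernel h₂deg)
    (fun u => (walkStationary_pos h₁deg u).le) (fun u => (walkStationary_pos h₂deg u).le)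
    (sum_walkStationary h₁deg) (sum_walkStationary h₂deg)
    (sum_walkStationary_mul_walkKernel h₁sym h₁deg)
    (sum_walkStationary_mul_walkKernel h₂sym h₂deg)⟩ c

theorem walk_eq_of_netOTC_eq_zero [Nonempty U] {c : U → U → ℝ} (hc : ∀ u v, 0 ≤ c u v)
    (hceq : ∀ u v, c u v = 0 → u = v) (h₁ : IsUndirectedNetwork w₁)
    (h₂ : IsUndirectedNetwork w₂) (h0 : netOTC w₁ w₂ c = 0) :
    walkStationary w₁ = walkStationary w₂ ∧ walkKernel w₁ = walkKernel w₂ := by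
  obtain ⟨⟨lam, R, h, hcost⟩, -⟩ := isLeast_netOTC c h₁ h₂
  exact h.eq_of_forall_ne_eq_zero (walkStationary_pos h₁.2.2)
    (eq_zero_of_sum_mul_eq_zero h.2.2.2.1 hc hceq (hcost.symm.trans h0))

theorem netOTC_triangle [Nonempty U] {c : U → U → ℝ} (hctri : ∀ u v w, c u w ≤ c u v + c v w)
    (h₁ : IsUndirectedNetwork w₁) (h₂ : IsUndirectedNetwork w₂) (h₃ : IsUndirectedNetwork w₃) :
    netOTC w₁ w₃ c ≤ netOTC w₁ w₂ c + netOTC w₂ w₃ c := by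
  obtain ⟨⟨lam₁₂, R₁₂, h₁₂, hcost₁₂⟩, -⟩ := isLeast_netOTC c h₁ h₂
  obtain ⟨⟨lam₂₃, R₂₃, h₂₃, hcost₂₃⟩, -⟩ := isLeast_netOTC c h₂ h₃
  obtain ⟨μ, ⟨hμ, rfl, rfl⟩, R₁₃, h₁₃⟩ := h₁₂.exists_glue h₂₃
  rw [hcost₁₂, hcost₂₃]
  exact ((isLeast_netOTC c h₁ h₃).2 ⟨_, R₁₃, h₁₃, rfl⟩).trans (sum_marginal₁₃_mul_le hctri hμ)

end RandomWalk

theorem netOTC_is_metric_general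
    {U : Type*} [Fintype U]
    (c : U → U → ℝ)
    (hceq : ∀ u v, c u v = 0 → u = v)
    (hcsym : ∀ u v, c u v = c v u)
    (hctri : ∀ u v w, c u w ≤ c u v + c v w)
    (w₁ w₂ w₃ : U → U → ℝ)
    (h1nn : ∀ u u', 0 ≤ w₁ u u') (h2nn : ∀ u u', 0 ≤ w₂ u u')
    (h3nn : ∀ u u', 0 ≤ w₃ u u')
    (h1sym : ∀ u u', w₁ u u' = w₁ u' u) (h2sym : ∀ u u', w₂ u u' = w₂ u' u)
    (h3sym : ∀ u u', w₃ u u' = w₃ u' u)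
    (h1deg : ∀ u, 0 < ∑ u', w₁ u u') (h2deg : ∀ u, 0 < ∑ u', w₂ u u')
    (h3deg : ∀ u, 0 < ∑ u', w₃ u u') :
    (netOTC w₁ w₂ c = 0 →
        ((∀ u u', 0 < w₁ u u' ↔ 0 < w₂ u u')
          ∧ ∃ C > (0 : ℝ), ∀ u u', w₁ u u' = C * w₂ u u'))
    ∧ netOTC w₁ w₂ c = netOTC w₂ w₁ c
    ∧ netOTC w₁ w₃ c ≤ netOTC w₁ w₂ c + netOTC w₂ w₃ c := by
  rcases isEmpty_or_nonempty U with _ | _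
  · exact ⟨fun _ => ⟨isEmptyElim, 1, one_pos, isEmptyElim⟩,
      by rw [netOTC_of_isEmpty, netOTC_of_isEmpty],
      by rw [netOTC_of_isEmpty, netOTC_of_isEmpty, netOTC_of_isEmpty, add_zero]⟩
  have hc : ∀ u v, 0 ≤ c u v := fun u v => by linarith [hctri u u u, hctri u v u, hcsym u v]
  have h₁ : IsUndirectedNetwork w₁ := ⟨h1nn, h1sym, h1deg⟩
  have h₂ : IsUndirectedNetwork w₂ := ⟨h2nn, h2sym, h2deg⟩
  have h₃ : IsUndirectedNetwork w₃ := ⟨h3nn, h3sym, h3deg⟩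
  refine ⟨fun h0 => ?_, netOTC_comm hcsym w₁ w₂, netOTC_triangle hctri h₁ h₂ h₃⟩
  obtain ⟨hπ, hP⟩ := walk_eq_of_netOTC_eq_zero hc hceq h₁ h₂ h0
  obtain ⟨C, hC, hw⟩ := exists_pos_mul_eq_of_walk_eq h1deg h2deg hπ hP
  exact ⟨fun u u' => by rw [hw, mul_pos_iff_of_pos_left hC], C, hC, hw⟩

/-- If the cost `c` is a metric on `U`, then for connected undirected
networks on `U`: `ρ(G₁,G₂) = 0` implies `G₁ ∼ G₂` (same edges, weights equal up to a
positive constant, i.e. identical random walks), `ρ` is symmetric, and `ρ` satisfies the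
triangle inequality; hence `ρ` is a metric on equivalence classes of connected undirected
networks under `∼`. -/
theorem netOTC_is_metric
    {U : Type*} [Fintype U]
    (c : U → U → ℝ)
    (hc0 : ∀ u, c u u = 0)
    (hceq : ∀ u v, c u v = 0 → u = v)
    (hcsym : ∀ u v, c u v = c v u)
    (hctri : ∀ u v w, c u w ≤ c u v + c v w)
    (w₁ w₂ w₃ : U → U → ℝ)
    (h1nn : ∀ u u', 0 ≤ w₁ u u') (h2nn : ∀ u u', 0 ≤ w₂ u u')
    (h3nn : ∀ u u', 0 ≤ w₃ u u')
    (h1sym : ∀ u u', w₁ u u' = w₁ u' u) (h2sym : ∀ u u', w₂ u u' = w₂ u' u)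
    (h3sym : ∀ u u', w₃ u u' = w₃ u' u)
    (h1conn : ∀ u u' : U, Relation.ReflTransGen (fun a b => 0 < w₁ a b) u u')
    (h2conn : ∀ u u' : U, Relation.ReflTransGen (fun a b => 0 < w₂ a b) u u')
    (h3conn : ∀ u u' : U, Relation.ReflTransGen (fun a b => 0 < w₃ a b) u u')
    (h1deg : ∀ u, 0 < ∑ u', w₁ u u') (h2deg : ∀ u, 0 < ∑ u', w₂ u u')
    (h3deg : ∀ u, 0 < ∑ u', w₃ u u') :
    (netOTC w₁ w₂ c = 0 →
        ((∀ u u', 0 < w₁ u u' ↔ 0 < w₂ u u')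
          ∧ ∃ C > (0 : ℝ), ∀ u u', w₁ u u' = C * w₂ u u'))
    ∧ netOTC w₁ w₂ c = netOTC w₂ w₁ c
    ∧ netOTC w₁ w₃ c ≤ netOTC w₁ w₂ c + netOTC w₂ w₃ c :=
  netOTC_is_metric_general c hceq hcsym hctri w₁ w₂ w₃ h1nn h2nn h3nn h1sym h2sym h3sym h1deg h2deg
    h3deg
end

section
/- If (X̃,Ỹ) is a deterministic transition coupling from X to Y (for each u ∈ U there is a unique v with P(Ỹ₀=v | X̃₀=u) = 1), then the induced map f: U → V satisfies the factor map condition: for all v,v' ∈ V and u ∈ f⁻¹(v), ∑_{u'∈f⁻¹(v')} P(u'|u) = Q(v'|v). -/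
/-!
Stationarity forces the coupling kernel to respect the support of its stationary law: from a
state of positive mass it can only move to states of positive mass. Since every `(u, f u)` has
positive mass and the mass lives on the graph of `f`, each row `R (u, f u)` lives on the graph of
`f` too. Its first marginal is then `P u u' = R (u, f u) (u', f u')`, and its second marginal,
restricted to the fibre `f⁻¹(v')`, is `Q (f u) v'`.
-/

open Finset

theorem kernel_apply_eq_zero_of_stationary {α : Type*} [Fintype α] {R : α → α → ℝ}
    {lam : α → ℝ} (hRnn : ∀ a b, 0 ≤ R a b) (hlamnn : ∀ a, 0 ≤ lam a)
    (hlamstat : ∀ b, ∑ a, lam a * R a b = lam b) {a b : α} (ha : 0 < lam a)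
    (hb : lam b = 0) : R a b = 0 := by
  have hterms : ∀ c ∈ univ, lam c * R c b = 0 :=
    (sum_eq_zero_iff_of_nonneg fun c _ => mul_nonneg (hlamnn c) (hRnn c b)).mp
      ((hlamstat b).trans hb)
  exact (mul_eq_zero.mp (hterms a (mem_univ a))).resolve_left ha.ne'

section Graph

variable {U V : Type*} (f : U → V) {r : U × V → ℝ}

theorem sum_snd_eq_apply_graph [Fintype V] (hr : ∀ u w, w ≠ f u → r (u, w) = 0) (u : U) :
    ∑ w, r (u, w) = r (u, f u) :=
  Fintype.sum_eq_single _ fun w hw => hr u w hw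

theorem sum_fst_eq_sum_fiber [Fintype U] [DecidableEq V] (hr : ∀ u w, w ≠ f u → r (u, w) = 0)
    (v : V) :
    ∑ u, r (u, v) = ∑ u ∈ univ.filter (fun u => f u = v), r (u, f u) := by
  rw [sum_filter]
  refine sum_congr rfl fun u _ => ?_
  by_cases hu : f u = v
  · rw [if_pos hu, hu]
  · rw [if_neg hu, hr u v (Ne.symm hu)]

end Graph

theorem deterministic_transition_coupling_gives_factor_general
    {U V : Type*} [Fintype U] [Fintype V] [DecidableEq V]
    (P : U → U → ℝ) (Q : V → V → ℝ) (f : U → V)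
    (R : U × V → U × V → ℝ) (lam : U × V → ℝ)
    (hRnn : ∀ a b, 0 ≤ R a b)
    (hTC1 : ∀ (a : U × V) (u' : U), ∑ v' : V, R a (u', v') = P a.1 u')
    (hTC2 : ∀ (a : U × V) (v' : V), ∑ u' : U, R a (u', v') = Q a.2 v')
    (hlamnn : ∀ a, 0 ≤ lam a)
    (hlamstat : ∀ b : U × V, ∑ a : U × V, lam a * R a b = lam b)
    (hdet : ∀ u v, 0 < lam (u, v) → v = f u)
    (hpos : ∀ u, 0 < lam (u, f u)) :
    ∀ (u : U) (v' : V),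
      ∑ u' ∈ Finset.univ.filter (fun u' => f u' = v'), P u u' = Q (f u) v' := by
  intro u v'
  have hgraph : ∀ u' w, w ≠ f u' → R (u, f u) (u', w) = 0 := fun u' w hw =>
    kernel_apply_eq_zero_of_stationary hRnn hlamnn hlamstat (hpos u)
      (le_antisymm (not_lt.mp fun h => hw (hdet u' w h)) (hlamnn _))
  calc ∑ u' ∈ univ.filter (fun u' => f u' = v'), P u u'
      = ∑ u' ∈ univ.filter (fun u' => f u' = v'), R (u, f u) (u', f u') :=
        sum_congr rfl fun u' _ =>
          (hTC1 (u, f u) u').symm.trans (sum_snd_eq_apply_graph f hgraph u')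
    _ = Q (f u) v' := by rw [← sum_fst_eq_sum_fiber f hgraph, hTC2]

/-- If `(X̃,Ỹ)` is a deterministic transition coupling from `X` to `Y`
(its stationary distribution `lam` is supported on the graph of a map `f : U → V`, and
every pair `(u, f(u))` has positive probability), then the induced map `f` satisfies the
factor map condition: for all `v' ∈ V` and `u ∈ U` (with `v = f(u)`),
`∑_{u' ∈ f⁻¹(v')} P(u'|u) = Q(v'|f(u))`. -/
theorem deterministic_transition_coupling_gives_factor
    {U V : Type*} [Fintype U] [Fintype V] [DecidableEq V]
    (P : U → U → ℝ) (Q : V → V → ℝ) (f : U → V)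
    (R : U × V → U × V → ℝ) (lam : U × V → ℝ)
    (hPnn : ∀ u u', 0 ≤ P u u') (hProw : ∀ u, ∑ u', P u u' = 1)
    (hQnn : ∀ v v', 0 ≤ Q v v') (hQrow : ∀ v, ∑ v', Q v v' = 1)
    (hRnn : ∀ a b, 0 ≤ R a b)
    (hTC1 : ∀ (a : U × V) (u' : U), ∑ v' : V, R a (u', v') = P a.1 u')
    (hTC2 : ∀ (a : U × V) (v' : V), ∑ u' : U, R a (u', v') = Q a.2 v')
    (hlamnn : ∀ a, 0 ≤ lam a) (hlamsum : ∑ a : U × V, lam a = 1)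
    (hlamstat : ∀ b : U × V, ∑ a : U × V, lam a * R a b = lam b)
    (hdet : ∀ u v, 0 < lam (u, v) → v = f u)
    (hpos : ∀ u, 0 < lam (u, f u)) :
    ∀ (u : U) (v' : V),
      ∑ u' ∈ Finset.univ.filter (fun u' => f u' = v'), P u u' = Q (f u) v' :=
  deterministic_transition_coupling_gives_factor_general P Q f R lam hRnn hTC1 hTC2 hlamnn hlamstat
    hdet hpos
end

section
/- Let f be a factor map from G₁ to G₂, and suppose the cost c: U×V → ℝ₊ is compatible with f, i.e., c(u, f(u)) ≤ c(u,v) for all u ∈ U, v ∈ V. Then the deterministic coupling (X, f(X)) is an optimal transition coupling: for every transition coupling (X̃,Ỹ) of X and Y, E[c(X̃₀,Ỹ₀)] ≥ E[c(X₀, f(X₀))], hence ρ(G₁,G₂) = ∑_{u∈U} c(u,f(u))·p(u). -/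
open Finset

section GraphCoupling

variable {U V : Type*} [DecidableEq V]

def graphCoupling (f : U → V) (p : U → ℝ) (a : U × V) : ℝ :=
  if a.2 = f a.1 then p a.1 else 0

theorem sum_graphCoupling_mul [Fintype U] [Fintype V] (f : U → V) (p : U → ℝ)
    (h : U × V → ℝ) :
    ∑ a, graphCoupling f p a * h a = ∑ u, p u * h (u, f u) := by
  rw [Fintype.sum_prod_type]
  simp [graphCoupling, ite_mul]

theorem graphCoupling_nonneg {f : U → V} {p : U → ℝ} (hp : ∀ u, 0 ≤ p u) (a : U × V) :
    0 ≤ graphCoupling f p a := by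
  unfold graphCoupling
  split_ifs
  exacts [hp _, le_rfl]

theorem sum_graphCoupling_fst [Fintype V] (f : U → V) (p : U → ℝ) (u : U) :
    ∑ v, graphCoupling f p (u, v) = p u := by
  simp [graphCoupling]

theorem sum_graphCoupling_snd [Fintype U] (f : U → V) (p : U → ℝ) (v : V) :
    ∑ u, graphCoupling f p (u, v) = ∑ u ∈ univ.filter (fun u => f u = v), p u := by
  simp only [graphCoupling, sum_filter, eq_comm]

def graphKernel (P : U → U → ℝ) (Q : V → V → ℝ) (f : U → V) (a b : U × V) : ℝ :=
  if a.2 = f a.1 then graphCoupling f (P a.1) b else P a.1 b.1 * Q a.2 b.2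

variable {P : U → U → ℝ} {Q : V → V → ℝ} {f : U → V}

theorem graphKernel_nonneg (hP : ∀ u u', 0 ≤ P u u') (hQ : ∀ v v', 0 ≤ Q v v')
    (a b : U × V) : 0 ≤ graphKernel P Q f a b := by
  unfold graphKernel
  split_ifs
  exacts [graphCoupling_nonneg (hP _) b, mul_nonneg (hP _ _) (hQ _ _)]

theorem sum_graphKernel_fst [Fintype U] [Fintype V] (hQrow : ∀ v, ∑ v', Q v v' = 1)
    (a : U × V) (u' : U) :
    ∑ v', graphKernel P Q f a (u', v') = P a.1 u' := by
  unfold graphKernel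
  split_ifs
  · exact sum_graphCoupling_fst f (P a.1) u'
  · simp only [← mul_sum, hQrow a.2, mul_one]

theorem sum_graphKernel_snd [Fintype U] [Fintype V] (hProw : ∀ u, ∑ u', P u u' = 1)
    (hfac : ∀ u v', ∑ u' ∈ univ.filter (fun u' => f u' = v'), P u u' = Q (f u) v')
    (a : U × V) (v' : V) :
    ∑ u', graphKernel P Q f a (u', v') = Q a.2 v' := by
  unfold graphKernel
  split_ifs with ha
  · rw [sum_graphCoupling_snd, hfac, ha]
  · simp only [← sum_mul, hProw a.1, one_mul]

theorem sum_graphCoupling_mul_graphKernel [Fintype U] [Fintype V] {p : U → ℝ}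
    (hpstat : ∀ u', ∑ u, p u * P u u' = p u') (b : U × V) :
    ∑ a, graphCoupling f p a * graphKernel P Q f a b = graphCoupling f p b := by
  rw [sum_graphCoupling_mul]
  simp only [graphKernel, graphCoupling, if_true]
  split_ifs
  exacts [hpstat b.1, by simp]

theorem isTCStat_graphCoupling [Fintype U] [Fintype V] {p : U → ℝ} {q : V → ℝ}
    (hPnn : ∀ u u', 0 ≤ P u u') (hProw : ∀ u, ∑ u', P u u' = 1)
    (hQnn : ∀ v v', 0 ≤ Q v v') (hQrow : ∀ v, ∑ v', Q v v' = 1)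
    (hfac : ∀ u v', ∑ u' ∈ univ.filter (fun u' => f u' = v'), P u u' = Q (f u) v')
    (hpnn : ∀ u, 0 ≤ p u) (hpsum : ∑ u, p u = 1) (hpstat : ∀ u', ∑ u, p u * P u u' = p u')
    (hq : ∀ v, q v = ∑ u ∈ univ.filter (fun u => f u = v), p u) :
    IsTCStat P Q p q (graphCoupling f p) (graphKernel P Q f) :=
  ⟨graphKernel_nonneg hPnn hQnn, sum_graphKernel_fst hQrow, sum_graphKernel_snd hProw hfac,
    graphCoupling_nonneg hpnn, by simpa [hpsum] using sum_graphCoupling_mul f p (fun _ => 1),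
    sum_graphCoupling_mul_graphKernel hpstat, sum_graphCoupling_fst f p,
    fun v => (sum_graphCoupling_snd f p v).trans (hq v).symm⟩

end GraphCoupling

theorem sum_mul_compatible_cost_le {U V : Type*} [Fintype U] [Fintype V]
    {lam : U × V → ℝ} {p : U → ℝ} {c : U → V → ℝ} {f : U → V}
    (hlam : ∀ a, 0 ≤ lam a) (hmarg : ∀ u, ∑ v, lam (u, v) = p u)
    (hcompat : ∀ u v, c u (f u) ≤ c u v) :
    ∑ u, p u * c u (f u) ≤ ∑ a, lam a * c a.1 a.2 := calc
  ∑ u, p u * c u (f u) = ∑ a : U × V, lam a * c a.1 (f a.1) := by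
    simp only [← hmarg, sum_mul, Fintype.sum_prod_type]
  _ ≤ ∑ a, lam a * c a.1 a.2 :=
    sum_le_sum fun a _ => mul_le_mul_of_nonneg_left (hcompat a.1 a.2) (hlam a)

theorem factor_compatible_cost_optimal_general
    {U V : Type*} [Fintype U] [Fintype V] [DecidableEq V]
    (P : U → U → ℝ) (Q : V → V → ℝ) (f : U → V) (p : U → ℝ) (q : V → ℝ)
    (c : U → V → ℝ)
    (hPnn : ∀ u u', 0 ≤ P u u') (hProw : ∀ u, ∑ u', P u u' = 1)
    (hQnn : ∀ v v', 0 ≤ Q v v') (hQrow : ∀ v, ∑ v', Q v v' = 1)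
    (hfac : ∀ (u : U) (v' : V),
      ∑ u' ∈ Finset.univ.filter (fun u' => f u' = v'), P u u' = Q (f u) v')
    (hpnn : ∀ u, 0 ≤ p u) (hpsum : ∑ u, p u = 1)
    (hpstat : ∀ u', ∑ u, p u * P u u' = p u')
    (hq : ∀ v, q v = ∑ u ∈ Finset.univ.filter (fun u => f u = v), p u)
    (hcompat : ∀ u v, c u (f u) ≤ c u v) :
    IsLeast {x : ℝ | ∃ (lam : U × V → ℝ) (R : U × V → U × V → ℝ),
        IsTCStat P Q p q lam R ∧ x = ∑ a : U × V, lam a * c a.1 a.2}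
      (∑ u, p u * c u (f u)) := by
  constructor
  · exact ⟨graphCoupling f p, graphKernel P Q f,
      isTCStat_graphCoupling hPnn hProw hQnn hQrow hfac hpnn hpsum hpstat hq,
      (sum_graphCoupling_mul f p fun a => c a.1 a.2).symm⟩
  · rintro _ ⟨lam, R, ⟨-, -, -, hlam, -, -, hmarg, -⟩, rfl⟩
    exact sum_mul_compatible_cost_le hlam hmarg hcompat

/-- If `f` is a factor map from `G₁` to `G₂` and the cost
`c : U × V → ℝ₊` is compatible with `f` (`c(u,f(u)) ≤ c(u,v)` for all `u, v`), then the
deterministic coupling `(X, f(X))` is an optimal transition coupling: every transition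
coupling has expected cost at least `E[c(X₀, f(X₀))]`, and this value is attained, so
`ρ(G₁,G₂) = ∑_u c(u,f(u)) p(u)`. -/
theorem factor_compatible_cost_optimal
    {U V : Type*} [Fintype U] [Fintype V] [DecidableEq V]
    (P : U → U → ℝ) (Q : V → V → ℝ) (f : U → V) (p : U → ℝ) (q : V → ℝ)
    (c : U → V → ℝ)
    (hPnn : ∀ u u', 0 ≤ P u u') (hProw : ∀ u, ∑ u', P u u' = 1)
    (hQnn : ∀ v v', 0 ≤ Q v v') (hQrow : ∀ v, ∑ v', Q v v' = 1)
    (hfac : ∀ (u : U) (v' : V),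
      ∑ u' ∈ Finset.univ.filter (fun u' => f u' = v'), P u u' = Q (f u) v')
    (hpnn : ∀ u, 0 ≤ p u) (hpsum : ∑ u, p u = 1)
    (hpstat : ∀ u', ∑ u, p u * P u u' = p u')
    (hq : ∀ v, q v = ∑ u ∈ Finset.univ.filter (fun u => f u = v), p u)
    (hcnn : ∀ u v, 0 ≤ c u v)
    (hcompat : ∀ u v, c u (f u) ≤ c u v) :
    IsLeast {x : ℝ | ∃ (lam : U × V → ℝ) (R : U × V → U × V → ℝ),
        IsTCStat P Q p q lam R ∧ x = ∑ a : U × V, lam a * c a.1 a.2}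
      (∑ u, p u * c u (f u)) :=
  factor_compatible_cost_optimal_general P Q f p q c hPnn hProw hQnn hQrow hfac hpnn hpsum hpstat hq
    hcompat
end

section
/- Suppose G₁, G₂, G₃ are strongly connected weighted directed networks with random walks X, Y, Z, and f: U → W, g: V → W are factor maps from G₁ to G₃ and G₂ to G₃, respectively. Then there exists a transition coupling (X̃,Ỹ) of X and Y such that f(X̃ₙ) = g(Ỹₙ) for all n almost surely. -/
/-!
On the diagonal `{(u, v) | f u = g v}` the kernel `R` moves `(u, v)` to `(u', v')` with
probability `P u u' * Q v v' / S w w'`, i.e. it draws `u'` and `v'` independently given the common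
image `w'`; the factor conditions say exactly that its marginals are `P` and `Q`, and it never
leaves the diagonal. The relatively independent product `p u * q v / r w` is a coupling of `p`
and `q` on the diagonal, but it need not be `R`-stationary. Instead, `R` maps the compact convex
set of diagonal couplings of `p` and `q` into itself, so Cesàro averages of its iterates
accumulate at a stationary coupling (Krylov–Bogolyubov).
-/

open Finset Filter Topology

theorem ContinuousLinearMap.exists_fixedPoint_of_mapsTo {E : Type*} [NormedAddCommGroup E]
    [NormedSpace ℝ E] (T : E →L[ℝ] E) {K : Set E} (hconv : Convex ℝ K) (hK : IsCompact K)
    (hne : K.Nonempty) (hT : Set.MapsTo T K K) : ∃ x ∈ K, T x = x := by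
  obtain ⟨x₀, hx₀⟩ := hne
  obtain ⟨C, hC⟩ := hK.isBounded.exists_norm_le
  set avg : ℕ → E := fun n => ∑ k ∈ range (n + 1), ((n : ℝ) + 1)⁻¹ • T^[k] x₀ with havg
  have havg_mem : ∀ n, avg n ∈ K := fun n =>
    hconv.sum_mem (fun _ _ => by positivity) (by simp [field]) fun k _ => hT.iterate k hx₀
  -- Cesàro averages are almost fixed: the defect telescopes
  have hdefect : ∀ n, T (avg n) - avg n = ((n : ℝ) + 1)⁻¹ • (T^[n + 1] x₀ - x₀) := by
    intro n
    simp only [havg, map_sum, map_smul, ← Function.iterate_succ_apply' T, ← smul_sum,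
      ← smul_sub, ← sum_sub_distrib, sum_range_sub (fun k => T^[k] x₀)]
    rfl
  have hdefect_lim : Tendsto (fun n => T (avg n) - avg n) atTop (𝓝 0) := by
    have hbound := (tendsto_one_div_add_atTop_nhds_zero_nat (𝕜 := ℝ)).const_mul (2 * C)
    rw [mul_zero] at hbound
    refine squeeze_zero_norm (fun n => ?_) hbound
    have hdiam : ‖T^[n + 1] x₀ - x₀‖ ≤ 2 * C := by
      linarith [norm_sub_le (T^[n + 1] x₀) x₀, hC _ (hT.iterate (n + 1) hx₀), hC _ hx₀]
    rw [hdefect, norm_smul, norm_inv, Real.norm_of_nonneg (by positivity), one_div, mul_comm]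
    gcongr
  obtain ⟨y, hyK, φ, hφ, hlim⟩ := hK.tendsto_subseq havg_mem
  refine ⟨y, hyK, sub_eq_zero.mp (tendsto_nhds_unique ?_ (hdefect_lim.comp hφ.tendsto_atTop))⟩
  exact ((T.continuous.tendsto y).comp hlim).sub hlim

section RelIndepProd

variable {U V W : Type*} [DecidableEq W] (f : U → W) (g : V → W)

noncomputable def relIndepProd (a : U → ℝ) (b : V → ℝ) (c : W → ℝ) (x : U × V) : ℝ :=
  if f x.1 = g x.2 then a x.1 * b x.2 / c (f x.1) else 0

variable {f g} {a : U → ℝ} {b : V → ℝ} {c : W → ℝ}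

theorem le_of_sum_fiber_eq [Fintype U] (ha : ∀ u, 0 ≤ a u)
    (ha_push : ∀ w, ∑ u ∈ univ.filter (fun u => f u = w), a u = c w) (u : U) : a u ≤ c (f u) :=
  ha_push (f u) ▸ single_le_sum (fun u' _ => ha u') (mem_filter.mpr ⟨mem_univ u, rfl⟩)

theorem relIndepProd_swap (x : U × V) :
    relIndepProd g f b a c x.swap = relIndepProd f g a b c x := by
  obtain ⟨u, v⟩ := x
  simp only [relIndepProd, Prod.swap_prod_mk, eq_comm (a := g v)]
  split_ifs with h
  · rw [h, mul_comm]
  · rfl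

theorem relIndepProd_of_ne {x : U × V} (h : f x.1 ≠ g x.2) : relIndepProd f g a b c x = 0 :=
  if_neg h

theorem relIndepProd_nonneg [Fintype U] (ha : ∀ u, 0 ≤ a u) (hb : ∀ v, 0 ≤ b v)
    (ha_push : ∀ w, ∑ u ∈ univ.filter (fun u => f u = w), a u = c w) (x : U × V) :
    0 ≤ relIndepProd f g a b c x := by
  unfold relIndepProd
  split_ifs
  · exact div_nonneg (mul_nonneg (ha _) (hb _)) ((ha _).trans (le_of_sum_fiber_eq ha ha_push _))
  · exact le_rfl

theorem sum_relIndepProd_right [Fintype U] [Fintype V] (ha : ∀ u, 0 ≤ a u)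
    (ha_push : ∀ w, ∑ u ∈ univ.filter (fun u => f u = w), a u = c w)
    (hb_push : ∀ w, ∑ v ∈ univ.filter (fun v => g v = w), b v = c w) (u : U) :
    ∑ v, relIndepProd f g a b c (u, v) = a u := by
  by_cases hc : c (f u) = 0
  · have hau : a u = 0 := le_antisymm (hc ▸ le_of_sum_fiber_eq ha ha_push u) (ha u)
    simp [relIndepProd, hau]
  · calc ∑ v, relIndepProd f g a b c (u, v)
          = (∑ v ∈ univ.filter (fun v => g v = f u), b v) * (a u / c (f u)) := by
            rw [sum_filter, sum_mul]
            refine sum_congr rfl fun v _ => ?_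
            simp only [relIndepProd, eq_comm (a := f u)]
            split_ifs <;> ring
      _ = a u := by rw [hb_push, mul_div_cancel₀ _ hc]

theorem sum_relIndepProd_left [Fintype U] [Fintype V] (hb : ∀ v, 0 ≤ b v)
    (ha_push : ∀ w, ∑ u ∈ univ.filter (fun u => f u = w), a u = c w)
    (hb_push : ∀ w, ∑ v ∈ univ.filter (fun v => g v = w), b v = c w) (v : V) :
    ∑ u, relIndepProd f g a b c (u, v) = b v := by
  calc ∑ u, relIndepProd f g a b c (u, v) = ∑ u, relIndepProd g f b a c (v, u) :=
        sum_congr rfl fun u _ => (relIndepProd_swap (u, v)).symm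
    _ = b v := sum_relIndepProd_right hb hb_push ha_push v

end RelIndepProd

section RelIndepKernel

variable {U V W : Type*} [DecidableEq W] (f : U → W) (g : V → W)
  (P : U → U → ℝ) (Q : V → V → ℝ) (S : W → W → ℝ)

/-- Off the diagonal `{f u = g v}` any coupling of the rows would do; we take the independent one. -/
noncomputable def relIndepKernel (x : U × V) : U × V → ℝ :=
  if f x.1 = g x.2 then relIndepProd f g (P x.1) (Q x.2) (S (f x.1))
  else fun y => P x.1 y.1 * Q x.2 y.2

variable {f g P Q S}

theorem relIndepKernel_nonneg [Fintype U] (hP : ∀ u u', 0 ≤ P u u') (hQ : ∀ v v', 0 ≤ Q v v')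
    (hf : ∀ u w', ∑ u' ∈ univ.filter (fun u' => f u' = w'), P u u' = S (f u) w')
    (x y : U × V) : 0 ≤ relIndepKernel f g P Q S x y := by
  unfold relIndepKernel
  split_ifs
  · exact relIndepProd_nonneg (hP x.1) (hQ x.2) (hf x.1) y
  · exact mul_nonneg (hP _ _) (hQ _ _)

theorem sum_relIndepKernel_right [Fintype U] [Fintype V] (hP : ∀ u u', 0 ≤ P u u')
    (hQ : ∀ v, ∑ v', Q v v' = 1)
    (hf : ∀ u w', ∑ u' ∈ univ.filter (fun u' => f u' = w'), P u u' = S (f u) w')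
    (hg : ∀ v w', ∑ v' ∈ univ.filter (fun v' => g v' = w'), Q v v' = S (g v) w')
    (x : U × V) (u' : U) : ∑ v', relIndepKernel f g P Q S x (u', v') = P x.1 u' := by
  unfold relIndepKernel
  split_ifs with hx
  · exact sum_relIndepProd_right (hP x.1) (hf x.1) (hx ▸ hg x.2) u'
  · simp only [← mul_sum, hQ, mul_one]

theorem sum_relIndepKernel_left [Fintype U] [Fintype V] (hP : ∀ u, ∑ u', P u u' = 1)
    (hQ : ∀ v v', 0 ≤ Q v v')
    (hf : ∀ u w', ∑ u' ∈ univ.filter (fun u' => f u' = w'), P u u' = S (f u) w')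
    (hg : ∀ v w', ∑ v' ∈ univ.filter (fun v' => g v' = w'), Q v v' = S (g v) w')
    (x : U × V) (v' : V) : ∑ u', relIndepKernel f g P Q S x (u', v') = Q x.2 v' := by
  unfold relIndepKernel
  split_ifs with hx
  · exact sum_relIndepProd_left (hQ x.2) (hf x.1) (hx ▸ hg x.2) v'
  · simp only [← sum_mul, hP, one_mul]

theorem relIndepKernel_of_ne {x y : U × V} (hx : f x.1 = g x.2) (hy : f y.1 ≠ g y.2) :
    relIndepKernel f g P Q S x y = 0 := by
  rw [relIndepKernel, if_pos hx, relIndepProd_of_ne hy]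

end RelIndepKernel

section FiberCouplings

variable {U V W : Type*} [Fintype U] [Fintype V] (f : U → W) (g : V → W) (p : U → ℝ) (q : V → ℝ)

def fiberCouplings : Set (U × V → ℝ) :=
  {μ | (∀ x, 0 ≤ μ x) ∧ (∀ u, ∑ v, μ (u, v) = p u) ∧ (∀ v, ∑ u, μ (u, v) = q v) ∧
    ∀ x : U × V, f x.1 ≠ g x.2 → μ x = 0}

theorem convex_fiberCouplings : Convex ℝ (fiberCouplings f g p q) := by
  rintro μ ⟨hμ₀, hμp, hμq, hμf⟩ ν ⟨hν₀, hνp, hνq, hνf⟩ s t hs ht hst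
  refine ⟨fun x => ?_, fun u => ?_, fun v => ?_, fun x hx => ?_⟩
  · simp only [Pi.add_apply, Pi.smul_apply, smul_eq_mul]
    exact add_nonneg (mul_nonneg hs (hμ₀ x)) (mul_nonneg ht (hν₀ x))
  · simp only [Pi.add_apply, Pi.smul_apply, smul_eq_mul, sum_add_distrib, ← mul_sum, hμp, hνp]
    rw [← add_mul, hst, one_mul]
  · simp only [Pi.add_apply, Pi.smul_apply, smul_eq_mul, sum_add_distrib, ← mul_sum, hμq, hνq]
    rw [← add_mul, hst, one_mul]
  · simp [hμf x hx, hνf x hx]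

theorem isClosed_fiberCouplings : IsClosed (fiberCouplings f g p q) := by
  simp only [fiberCouplings, Set.ofPred_and, Set.ofPred_forall]
  refine (isClosed_iInter fun x => isClosed_le continuous_const (continuous_apply x)).inter
    ((isClosed_iInter fun u => isClosed_eq ?_ continuous_const).inter
    ((isClosed_iInter fun v => isClosed_eq ?_ continuous_const).inter
    (isClosed_iInter fun x => isClosed_iInter fun _ => isClosed_eq (continuous_apply x)
      continuous_const)))
  all_goals exact continuous_finsetSum _ fun _ _ => continuous_apply _

theorem isCompact_fiberCouplings : IsCompact (fiberCouplings f g p q) := by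
  refine (isCompact_univ_pi fun x : U × V => isCompact_Icc (a := 0) (b := p x.1)).of_isClosed_subset
    (isClosed_fiberCouplings f g p q) fun μ ⟨hμ₀, hμp, _⟩ x _ => ⟨hμ₀ x, ?_⟩
  rw [← hμp x.1]
  exact single_le_sum (f := fun v => μ (x.1, v)) (fun v _ => hμ₀ _) (mem_univ x.2)

variable {f g p q}

theorem relIndepProd_mem_fiberCouplings [DecidableEq W] {r : W → ℝ} (hp : ∀ u, 0 ≤ p u)
    (hq : ∀ v, 0 ≤ q v) (hpr : ∀ w, ∑ u ∈ univ.filter (fun u => f u = w), p u = r w)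
    (hqr : ∀ w, ∑ v ∈ univ.filter (fun v => g v = w), q v = r w) :
    relIndepProd f g p q r ∈ fiberCouplings f g p q :=
  ⟨relIndepProd_nonneg hp hq hpr, sum_relIndepProd_right hp hpr hqr,
    sum_relIndepProd_left hq hpr hqr, fun _ => relIndepProd_of_ne⟩

theorem vecMul_mem_fiberCouplings {P : U → U → ℝ} {Q : V → V → ℝ} {R : Matrix (U × V) (U × V) ℝ}
    (hR : ∀ x y, 0 ≤ R x y) (hRP : ∀ x u', ∑ v', R x (u', v') = P x.1 u')
    (hRQ : ∀ x v', ∑ u', R x (u', v') = Q x.2 v')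
    (hRf : ∀ x y, f x.1 = g x.2 → f y.1 ≠ g y.2 → R x y = 0)
    (hp : ∀ u', ∑ u, p u * P u u' = p u') (hq : ∀ v', ∑ v, q v * Q v v' = q v')
    {μ : U × V → ℝ} (hμ : μ ∈ fiberCouplings f g p q) :
    Matrix.vecMul μ R ∈ fiberCouplings f g p q := by
  obtain ⟨hμ₀, hμp, hμq, hμf⟩ := hμ
  refine ⟨fun y => sum_nonneg fun x _ => mul_nonneg (hμ₀ x) (hR x y), fun u' => ?_,
    fun v' => ?_, fun y hy => sum_eq_zero fun x _ => ?_⟩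
  · simp only [Matrix.vecMul, dotProduct]
    rw [sum_comm]
    simp_rw [← mul_sum, hRP, Fintype.sum_prod_type, ← sum_mul, hμp, hp]
  · simp only [Matrix.vecMul, dotProduct]
    rw [sum_comm]
    simp_rw [← mul_sum, hRQ, Fintype.sum_prod_type_right, ← sum_mul, hμq, hq]
  · by_cases hx : f x.1 = g x.2
    · exact mul_eq_zero_of_right _ (hRf x y hx hy)
    · exact mul_eq_zero_of_left (hμf x hx) _

end FiberCouplings

theorem relatively_independent_transition_coupling_general
    {U V W : Type*} [Fintype U] [Fintype V]
    [DecidableEq W]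
    (P : U → U → ℝ) (Q : V → V → ℝ) (S : W → W → ℝ)
    (f : U → W) (g : V → W) (p : U → ℝ) (q : V → ℝ) (r : W → ℝ)
    (hPnn : ∀ u u', 0 ≤ P u u') (hProw : ∀ u, ∑ u', P u u' = 1)
    (hQnn : ∀ v v', 0 ≤ Q v v') (hQrow : ∀ v, ∑ v', Q v v' = 1)
    (hffac : ∀ (u : U) (w' : W),
      ∑ u' ∈ Finset.univ.filter (fun u' => f u' = w'), P u u' = S (f u) w')
    (hgfac : ∀ (v : V) (w' : W),
      ∑ v' ∈ Finset.univ.filter (fun v' => g v' = w'), Q v v' = S (g v) w')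
    (hpnn : ∀ u, 0 ≤ p u) (hpsum : ∑ u, p u = 1)
    (hpstat : ∀ u', ∑ u, p u * P u u' = p u')
    (hqnn : ∀ v, 0 ≤ q v)
    (hqstat : ∀ v', ∑ v, q v * Q v v' = q v')
    (hpushf : ∀ w, ∑ u ∈ Finset.univ.filter (fun u => f u = w), p u = r w)
    (hpushg : ∀ w, ∑ v ∈ Finset.univ.filter (fun v => g v = w), q v = r w) :
    ∃ (lam : U × V → ℝ) (R : U × V → U × V → ℝ),
      (∀ a b, 0 ≤ R a b) ∧
      (∀ (a : U × V) (u' : U), ∑ v' : V, R a (u', v') = P a.1 u') ∧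
      (∀ (a : U × V) (v' : V), ∑ u' : U, R a (u', v') = Q a.2 v') ∧
      (∀ a, 0 ≤ lam a) ∧ (∑ a : U × V, lam a = 1) ∧
      (∀ b : U × V, ∑ a : U × V, lam a * R a b = lam b) ∧
      (∀ u, ∑ v, lam (u, v) = p u) ∧
      (∀ v, ∑ u, lam (u, v) = q v) ∧
      (∀ u v, lam (u, v) ≠ 0 → f u = g v) ∧
      (∀ u v u' v', lam (u, v) ≠ 0 → R (u, v) (u', v') ≠ 0 → f u' = g v') := by
  set R := relIndepKernel f g P Q S
  have hR_nonneg : ∀ x y, 0 ≤ R x y := relIndepKernel_nonneg hPnn hQnn hffac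
  have hRP : ∀ x u', ∑ v', R x (u', v') = P x.1 u' :=
    sum_relIndepKernel_right hPnn hQrow hffac hgfac
  have hRQ : ∀ x v', ∑ u', R x (u', v') = Q x.2 v' :=
    sum_relIndepKernel_left hProw hQnn hffac hgfac
  have hR_diag : ∀ x y, f x.1 = g x.2 → f y.1 ≠ g y.2 → R x y = 0 :=
    fun _ _ => relIndepKernel_of_ne
  obtain ⟨lam, ⟨hlam_nonneg, hlam_p, hlam_q, hlam_diag⟩, hlam_stat⟩ :=
    (Matrix.vecMulLinear R).toContinuousLinearMap.exists_fixedPoint_of_mapsTo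
      (convex_fiberCouplings f g p q) (isCompact_fiberCouplings f g p q)
      ⟨_, relIndepProd_mem_fiberCouplings hpnn hqnn hpushf hpushg⟩
      fun _ => vecMul_mem_fiberCouplings hR_nonneg hRP hRQ hR_diag hpstat hqstat
  have hlam_supp : ∀ u v, lam (u, v) ≠ 0 → f u = g v :=
    fun u v hlam => by_contra fun hne => hlam (hlam_diag (u, v) hne)
  refine ⟨lam, R, hR_nonneg, hRP, hRQ, hlam_nonneg, ?_, congrFun hlam_stat, hlam_p, hlam_q,
    hlam_supp, fun u v u' v' hlam hR =>
      by_contra fun hne => hR (hR_diag _ _ (hlam_supp u v hlam) hne)⟩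
  rw [Fintype.sum_prod_type]
  simp_rw [hlam_p, hpsum]

/-- Suppose `G₁, G₂, G₃` are strongly connected weighted directed networks
with random walks `X, Y, Z` (kernels `P, Q, S`, stationary distributions `p, q, r`), and
`f : U → W`, `g : V → W` are factor maps from `G₁` to `G₃` and from `G₂` to `G₃`.  Then
there exists a transition coupling `(X̃,Ỹ)` of `X` and `Y` (a stationary transition
coupling `(lam, R)`) such that `f(X̃ₙ) = g(Ỹₙ)` for all `n` almost surely: the coupling is
supported on `{(u,v) : f(u) = g(v)}` and its kernel never leaves this set. -/
theorem relatively_independent_transition_coupling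
    {U V W : Type*} [Fintype U] [Fintype V] [Fintype W]
    [DecidableEq U] [DecidableEq V] [DecidableEq W]
    (P : U → U → ℝ) (Q : V → V → ℝ) (S : W → W → ℝ)
    (f : U → W) (g : V → W) (p : U → ℝ) (q : V → ℝ) (r : W → ℝ)
    (hPnn : ∀ u u', 0 ≤ P u u') (hProw : ∀ u, ∑ u', P u u' = 1)
    (hQnn : ∀ v v', 0 ≤ Q v v') (hQrow : ∀ v, ∑ v', Q v v' = 1)
    (hSnn : ∀ w w', 0 ≤ S w w') (hSrow : ∀ w, ∑ w', S w w' = 1)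
    (hffac : ∀ (u : U) (w' : W),
      ∑ u' ∈ Finset.univ.filter (fun u' => f u' = w'), P u u' = S (f u) w')
    (hgfac : ∀ (v : V) (w' : W),
      ∑ v' ∈ Finset.univ.filter (fun v' => g v' = w'), Q v v' = S (g v) w')
    (hpnn : ∀ u, 0 ≤ p u) (hpsum : ∑ u, p u = 1)
    (hpstat : ∀ u', ∑ u, p u * P u u' = p u')
    (hqnn : ∀ v, 0 ≤ q v) (hqsum : ∑ v, q v = 1)
    (hqstat : ∀ v', ∑ v, q v * Q v v' = q v')
    (hrpos : ∀ w, 0 < r w) (hrsum : ∑ w, r w = 1)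
    (hrstat : ∀ w', ∑ w, r w * S w w' = r w')
    (hpushf : ∀ w, ∑ u ∈ Finset.univ.filter (fun u => f u = w), p u = r w)
    (hpushg : ∀ w, ∑ v ∈ Finset.univ.filter (fun v => g v = w), q v = r w) :
    ∃ (lam : U × V → ℝ) (R : U × V → U × V → ℝ),
      (∀ a b, 0 ≤ R a b) ∧
      (∀ (a : U × V) (u' : U), ∑ v' : V, R a (u', v') = P a.1 u') ∧
      (∀ (a : U × V) (v' : V), ∑ u' : U, R a (u', v') = Q a.2 v') ∧
      (∀ a, 0 ≤ lam a) ∧ (∑ a : U × V, lam a = 1) ∧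
      (∀ b : U × V, ∑ a : U × V, lam a * R a b = lam b) ∧
      (∀ u, ∑ v, lam (u, v) = p u) ∧
      (∀ v, ∑ u, lam (u, v) = q v) ∧
      (∀ u v, lam (u, v) ≠ 0 → f u = g v) ∧
      (∀ u v u' v', lam (u, v) ≠ 0 → R (u, v) (u', v') ≠ 0 → f u' = g v') :=
  relatively_independent_transition_coupling_general P Q S f g p q r hPnn hProw hQnn hQrow hffac
    hgfac hpnn hpsum hpstat hqnn hqstat hpushf hpushg
end

section
/- If G₂ is a factor of G₁ via factor map f and the cost c is compatible with f, then the NetOTC vertex alignment obtained from the optimal coupling (X, f(X)) is π_v(u,v) = p(u)·1{f(u)=v}, and the edge alignment is π_e((u,u'),(v,v')) = p(u)P(u'|u)·1{f(u)=v, f(u')=v'}; in particular, π_e is supported on pairs ((u,u'),(f(u),f(u'))) with (u,u') an edge of G₁, and (f(u),f(u')) is then necessarily an edge of G₂. -/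
open Finset

theorem factor_kernel_pos_of_pos {U V : Type*} [Fintype U] [DecidableEq V]
    {P : U → U → ℝ} {Q : V → V → ℝ} {f : U → V} (hPnn : ∀ u u', 0 ≤ P u u')
    (hfac : ∀ (u : U) (v' : V), ∑ u' ∈ univ.filter (fun u' => f u' = v'), P u u' = Q (f u) v')
    {u u' : U} (h : 0 < P u u') : 0 < Q (f u) (f u') := by
  rw [← hfac]
  exact h.trans_le <| single_le_sum (fun x _ => hPnn u x) (by simp)

theorem factor_alignment_support_general
    {U V : Type*} [Fintype U] [DecidableEq V]
    (P : U → U → ℝ) (Q : V → V → ℝ) (f : U → V) (p : U → ℝ)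
    (hPnn : ∀ u u', 0 ≤ P u u')
    (hfac : ∀ (u : U) (v' : V),
      ∑ u' ∈ Finset.univ.filter (fun u' => f u' = v'), P u u' = Q (f u) v')
    (hpnn : ∀ u, 0 ≤ p u) :
    let πv : U → V → ℝ := fun u v => p u * (if f u = v then 1 else 0)
    let πe : U → U → V → V → ℝ := fun u u' v v' =>
      p u * P u u' * (if f u = v ∧ f u' = v' then 1 else 0)
    (∀ u v, πv u v = p u * (if f u = v then 1 else 0)) ∧
    (∀ u u' v v', 0 < πe u u' v v' →
      f u = v ∧ f u' = v' ∧ 0 < P u u' ∧ 0 < Q v v') := by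
  intro πv πe
  refine ⟨fun _ _ => rfl, fun u u' v v' h => ?_⟩
  obtain ⟨rfl, rfl⟩ : f u = v ∧ f u' = v' := by
    by_contra hc
    simp [πe, hc] at h
  have hP : 0 < P u u' := pos_of_mul_pos_right (by simpa [πe] using h) (hpnn u)
  exact ⟨rfl, rfl, hP, factor_kernel_pos_of_pos hPnn hfac hP⟩

/-- If `G₂` is a factor of `G₁` via factor map `f` and the cost `c` is
compatible with `f`, then the NetOTC vertex alignment obtained from the optimal coupling
`(X, f(X))` is `π_v(u,v) = p(u)·1{f(u)=v}`, and the edge alignment is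
`π_e((u,u'),(v,v')) = p(u) P(u'|u)·1{f(u)=v, f(u')=v'}`.  In particular `π_e` is supported
on pairs `((u,u'), (f(u), f(u')))` with `(u,u')` an edge of `G₁` (`P(u'|u) > 0`), and then
`(f(u), f(u'))` is necessarily an edge of `G₂` (`Q(f(u)|f(u')) > 0`). -/
theorem factor_alignment_support
    {U V : Type*} [Fintype U] [Fintype V] [DecidableEq V]
    (P : U → U → ℝ) (Q : V → V → ℝ) (f : U → V) (p : U → ℝ) (c : U → V → ℝ)
    (hPnn : ∀ u u', 0 ≤ P u u') (hProw : ∀ u, ∑ u', P u u' = 1)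
    (hQnn : ∀ v v', 0 ≤ Q v v') (hQrow : ∀ v, ∑ v', Q v v' = 1)
    (hfac : ∀ (u : U) (v' : V),
      ∑ u' ∈ Finset.univ.filter (fun u' => f u' = v'), P u u' = Q (f u) v')
    (hpnn : ∀ u, 0 ≤ p u) (hpsum : ∑ u, p u = 1)
    (hpstat : ∀ u', ∑ u, p u * P u u' = p u')
    (hcompat : ∀ u v, c u (f u) ≤ c u v) :
    let πv : U → V → ℝ := fun u v => p u * (if f u = v then 1 else 0)
    let πe : U → U → V → V → ℝ := fun u u' v v' =>
      p u * P u u' * (if f u = v ∧ f u' = v' then 1 else 0)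
    (∀ u v, πv u v = p u * (if f u = v then 1 else 0)) ∧
    (∀ u u' v v', 0 < πe u u' v v' →
      f u = v ∧ f u' = v' ∧ 0 < P u u' ∧ 0 < Q v v') :=
  factor_alignment_support_general P Q f p hPnn hfac hpnn
end
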